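/- arXiv:1201.6097 — 7 statements merged into one kernel-verified Lean document; each statement's English description precedes it below -/
import Mathlib

section
/- Let (X, d, μ) be upper doubling with dominating function λ and constant C_λ, i.e., μ(B(x,r)) ≤ λ(x,r) ≤ C_λ λ(x, r/2) for all x and r, with r ↦ λ(x,r) nondecreasing. If α > 1 and β > C_λ^{log₂ α}, then for every ball B ⊂ X with μ(B) > 0 there exists j ∈ ℕ such that the ball α^j B is (α, β)-doubling, i.e., μ(α^{j+1} B) ≤ β μ(α^j B). -/
open Metric MeasureTheory

/-- In an upper doubling metric measure space (with dominating function `Λ` and constant `Cl`),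
if `α > 1` and `β > Cl ^ (log₂ α)`, then every ball `B` of positive measure has a dilate
`α^j B` that is `(α, β)`-doubling. -/
theorem exists_doubling_dilate {X : Type*} [MetricSpace X] [MeasurableSpace X] [BorelSpace X]
    (μ : Measure X) (Λ : X → ℝ → ℝ) (Cl : ℝ)
    (hΛpos : ∀ (x : X) (r : ℝ), 0 < r → 0 < Λ x r)
    (hΛmono : ∀ (x : X) (r s : ℝ), 0 < r → r ≤ s → Λ x r ≤ Λ x s)
    (hΛdom : ∀ (x : X) (r : ℝ), 0 < r → μ (ball x r) ≤ ENNReal.ofReal (Λ x r))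
    (hΛdouble : ∀ (x : X) (r : ℝ), 0 < r → Λ x r ≤ Cl * Λ x (r / 2))
    (α β : ℝ) (hα : 1 < α) (hβ : Cl ^ Real.logb 2 α < β)
    (x : X) (r : ℝ) (hr : 0 < r) (h0 : 0 < μ (ball x r)) :
    ∃ j : ℕ, μ (ball x (α ^ (j + 1) * r)) ≤ ENNReal.ofReal β * μ (ball x (α ^ j * r)) := by
  by_contra hcon
  push_neg at hcon
  have hα0 : (0:ℝ) < α := lt_trans one_pos hα
  -- Cl ≥ 1
  have hCl1 : 1 ≤ Cl := by
    have h1 := hΛdouble x r hr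
    have h2 := hΛmono x (r/2) r (by positivity) (by linarith)
    have hp := hΛpos x (r/2) (by positivity)
    nlinarith
  have hCl0 : (0:ℝ) < Cl := lt_of_lt_of_le one_pos hCl1
  set c : ℝ := Cl ^ Real.logb 2 α with hc
  have hlogpos : 0 < Real.logb 2 α := Real.logb_pos one_lt_two hα
  have hc1 : (1:ℝ) ≤ c := Real.one_le_rpow hCl1 hlogpos.le
  have hβ1 : (1:ℝ) < β := lt_of_le_of_lt hc1 hβ
  -- iterated doubling of Λ
  have hiter : ∀ (k : ℕ) (s : ℝ), 0 < s → Λ x s ≤ Cl ^ k * Λ x (s / 2 ^ k) := by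
    intro k
    induction k with
    | zero => intro s hs; simp
    | succ k ih =>
      intro s hs
      have h1 := ih s hs
      have h2 := hΛdouble x (s / 2 ^ k) (by positivity)
      have h3 : s / 2 ^ k / 2 = s / 2 ^ (k+1) := by ring
      rw [h3] at h2
      calc Λ x s ≤ Cl ^ k * Λ x (s / 2 ^ k) := h1
        _ ≤ Cl ^ k * (Cl * Λ x (s / 2 ^ (k+1))) := by
            apply mul_le_mul_of_nonneg_left h2 (by positivity)
        _ = Cl ^ (k+1) * Λ x (s / 2 ^ (k+1)) := by ring
  -- growth of measures
  have hgrow : ∀ n : ℕ, ENNReal.ofReal β ^ n * μ (ball x r) ≤ μ (ball x (α ^ n * r)) := by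
    intro n
    induction n with
    | zero => simp
    | succ n ih =>
      have h1 := (hcon n).le
      calc ENNReal.ofReal β ^ (n+1) * μ (ball x r)
          = ENNReal.ofReal β * (ENNReal.ofReal β ^ n * μ (ball x r)) := by ring
        _ ≤ ENNReal.ofReal β * μ (ball x (α ^ n * r)) :=
            mul_le_mul_right ih _
        _ ≤ μ (ball x (α ^ (n+1) * r)) := h1
  -- finiteness of μ (ball x r)
  have hfin : μ (ball x r) ≠ ⊤ :=
    ne_top_of_le_ne_top ENNReal.ofReal_ne_top (hΛdom x r hr)
  set m : ℝ := (μ (ball x r)).toReal with hm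
  have hm0 : 0 < m := ENNReal.toReal_pos h0.ne' hfin
  -- main inequality for each n
  have key : ∀ n : ℕ, β ^ n * m ≤ c ^ n * (Cl * Λ x r) := by
    intro n
    set k : ℕ := ⌈(n : ℝ) * Real.logb 2 α⌉₊ with hk
    have hklb : (n : ℝ) * Real.logb 2 α ≤ k := Nat.le_ceil _
    have hkub : (k : ℝ) ≤ (n : ℝ) * Real.logb 2 α + 1 :=
      (Nat.ceil_lt_add_one (by positivity)).le
    -- 2^k ≥ α^n
    have h2k : α ^ n ≤ (2:ℝ) ^ k := by
      have : α ^ n = (2:ℝ) ^ ((n : ℝ) * Real.logb 2 α) := by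
        rw [mul_comm, Real.rpow_mul (by norm_num : (0:ℝ) ≤ 2),
          Real.rpow_logb two_pos (by norm_num) hα0, Real.rpow_natCast]
      rw [this, ← Real.rpow_natCast 2 k]
      exact Real.rpow_le_rpow_of_exponent_le one_le_two hklb
    have hsr : α ^ n * r / 2 ^ k ≤ r := by
      rw [div_le_iff₀ (by positivity)]
      have : α ^ n * r ≤ 2 ^ k * r := by
        apply mul_le_mul_of_nonneg_right h2k hr.le
      linarith
    -- Λ bound
    have hΛb : Λ x (α ^ n * r) ≤ Cl ^ k * Λ x r := by
      calc Λ x (α ^ n * r) ≤ Cl ^ k * Λ x (α ^ n * r / 2 ^ k) :=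
            hiter k _ (by positivity)
        _ ≤ Cl ^ k * Λ x r := by
            apply mul_le_mul_of_nonneg_left
              (hΛmono x _ _ (by positivity) hsr) (by positivity)
    -- Cl^k ≤ c^n * Cl
    have hClk : Cl ^ k ≤ c ^ n * Cl := by
      have h1 : (Cl:ℝ) ^ (k:ℝ) ≤ Cl ^ ((n : ℝ) * Real.logb 2 α + 1) :=
        Real.rpow_le_rpow_of_exponent_le hCl1 hkub
      have h2 : Cl ^ ((n : ℝ) * Real.logb 2 α + 1) = c ^ n * Cl := by
        rw [Real.rpow_add hCl0, Real.rpow_one, mul_comm (n:ℝ), Real.rpow_mul hCl0.le,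
          Real.rpow_natCast]
      rw [← Real.rpow_natCast Cl k]; exact h2 ▸ h1
    -- combine in ENNReal then pass to ℝ
    have hE : ENNReal.ofReal β ^ n * μ (ball x r) ≤ ENNReal.ofReal (Cl ^ k * Λ x r) := by
      calc ENNReal.ofReal β ^ n * μ (ball x r) ≤ μ (ball x (α ^ n * r)) := hgrow n
        _ ≤ ENNReal.ofReal (Λ x (α ^ n * r)) := hΛdom x _ (by positivity)
        _ ≤ ENNReal.ofReal (Cl ^ k * Λ x r) := ENNReal.ofReal_le_ofReal hΛb
    have hE' : ENNReal.ofReal (β ^ n) * μ (ball x r) ≤ ENNReal.ofReal (Cl ^ k * Λ x r) := by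
      rwa [ENNReal.ofReal_pow (by linarith)]
    have hR : β ^ n * m ≤ Cl ^ k * Λ x r := by
      have := ENNReal.toReal_le_of_le_ofReal
        (mul_nonneg (by positivity) (hΛpos x r hr).le) hE'
      rwa [ENNReal.toReal_mul, ENNReal.toReal_ofReal (by positivity)] at this
    calc β ^ n * m ≤ Cl ^ k * Λ x r := hR
      _ ≤ c ^ n * Cl * Λ x r := by
          apply mul_le_mul_of_nonneg_right hClk (hΛpos x r hr).le
      _ = c ^ n * (Cl * Λ x r) := by ring
  -- contradiction via unboundedness of (β/c)^n
  have hc0 : (0:ℝ) < c := lt_of_lt_of_le one_pos hc1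
  have hratio : (1:ℝ) < β / c := (one_lt_div hc0).mpr hβ
  obtain ⟨n, hn⟩ := pow_unbounded_of_one_lt (Cl * Λ x r / m) hratio
  have hkn := key n
  have : Cl * Λ x r / m < β ^ n / c ^ n := by
    rwa [div_pow] at hn
  rw [div_lt_div_iff₀ hm0 (by positivity)] at this
  nlinarith [pow_pos hc0 n, pow_pos (lt_trans one_pos hβ1) n]
end

section
/- Let (X, d, μ) be an upper doubling metric measure space with dominating function λ satisfying λ(x, r) ≤ C λ(y, r) whenever d(x, y) ≤ r. Then for any two balls B ⊂ S ⊂ R one has δ(B, R) ≤ δ(B, S) + c δ(S, R) + c for some constant c depending only on the space, where δ(B,S) = ∫_{(2S)∖B} dμ(x)/λ(c_B, d(x, c_B)) and c_B is the center of B. -/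
open Metric MeasureTheory

/-- Tolsa-Hytönen coefficient `δ(B, S)` of two balls `B ⊆ S`. -/
noncomputable def delta {X : Type*} [MetricSpace X] [MeasurableSpace X]
    (μ : Measure X) (Λ : X → ℝ → ℝ) (cB : X) (rB : ℝ) (cS : X) (rS : ℝ) : ℝ :=
  (∫⁻ x in ball cS (2 * rS) \ ball cB rB,
      ENNReal.ofReal ((Λ cB (dist x cB))⁻¹) ∂μ).toReal

/-!
Split `2R ∖ B` into `2S ∖ B`, which contributes `δ(B, S)`, and `2R ∖ 2S`. A point `x` outside
`2S` satisfies `d(c_S, c_B) < r_S ≤ d(x, c_B)` and `d(x, c_S) ≤ 2 d(x, c_B)`, so doubling,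
monotonicity and the comparison condition give `λ(c_S, d(x, c_S)) ≤ C_λ C₀ λ(c_B, d(x, c_B))`.
Hence the integral over `2R ∖ 2S ⊆ 2R ∖ S` is at most `C_λ C₀ δ(S, R)`. All integrals involved
are finite because `1/λ(c, d(x, c)) ≤ 1/λ(c, r)` off `B(c, r)` and `μ(B(x, r)) ≤ λ(x, r)`.
-/

namespace UpperDoubling

noncomputable def deltaLIntegral {X : Type*} [MetricSpace X] [MeasurableSpace X]
    (μ : Measure X) (Λ : X → ℝ → ℝ) (cB : X) (rB : ℝ) (cS : X) (rS : ℝ) : ENNReal :=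
  ∫⁻ x in ball cS (2 * rS) \ ball cB rB, ENNReal.ofReal ((Λ cB (dist x cB))⁻¹) ∂μ

variable {X : Type*} {Λ : X → ℝ → ℝ} {Cl C₀ : ℝ}

lemma doubling_const_pos (hΛpos : ∀ (x : X) (r : ℝ), 0 < r → 0 < Λ x r)
    (hΛdouble : ∀ (x : X) (r : ℝ), 0 < r → Λ x r ≤ Cl * Λ x (r / 2)) (x : X) : 0 < Cl :=
  pos_of_mul_pos_left ((hΛpos x 1 one_pos).trans_le (hΛdouble x 1 one_pos))
    (hΛpos x _ (by norm_num)).le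

variable [MetricSpace X]

lemma comparison_const_pos (hΛpos : ∀ (x : X) (r : ℝ), 0 < r → 0 < Λ x r)
    (hΛcomp : ∀ (x y : X) (r : ℝ), 0 < r → dist x y ≤ r → Λ x r ≤ C₀ * Λ y r) (x : X) :
    0 < C₀ :=
  pos_of_mul_pos_left ((hΛpos x 1 one_pos).trans_le (hΛcomp x x 1 one_pos (by simp)))
    (hΛpos x 1 one_pos).le

lemma dominating_le_mul_of_dist_le (hΛpos : ∀ (x : X) (r : ℝ), 0 < r → 0 < Λ x r)
    (hΛmono : ∀ (x : X) (r s : ℝ), 0 < r → r ≤ s → Λ x r ≤ Λ x s)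
    (hΛdouble : ∀ (x : X) (r : ℝ), 0 < r → Λ x r ≤ Cl * Λ x (r / 2))
    (hΛcomp : ∀ (x y : X) (r : ℝ), 0 < r → dist x y ≤ r → Λ x r ≤ C₀ * Λ y r)
    {x y z : X} (hzx : 0 < dist z x) (hxy : dist x y ≤ dist z y)
    (hzx_le : dist z x ≤ 2 * dist z y) :
    Λ x (dist z x) ≤ Cl * C₀ * Λ y (dist z y) := by
  have hCl := (doubling_const_pos hΛpos hΛdouble x).le
  have hzy : 0 < dist z y := by linarith
  calc Λ x (dist z x) ≤ Cl * Λ x (dist z x / 2) := hΛdouble x _ hzx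
    _ ≤ Cl * Λ x (dist z y) := by gcongr; exact hΛmono x _ _ (by positivity) (by linarith)
    _ ≤ Cl * (C₀ * Λ y (dist z y)) := by gcongr; exact hΛcomp x y _ hzy hxy
    _ = Cl * C₀ * Λ y (dist z y) := by ring

lemma inv_dominating_le_mul_of_le_dist (hΛpos : ∀ (x : X) (r : ℝ), 0 < r → 0 < Λ x r)
    (hΛmono : ∀ (x : X) (r s : ℝ), 0 < r → r ≤ s → Λ x r ≤ Λ x s)
    (hΛdouble : ∀ (x : X) (r : ℝ), 0 < r → Λ x r ≤ Cl * Λ x (r / 2))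
    (hΛcomp : ∀ (x y : X) (r : ℝ), 0 < r → dist x y ≤ r → Λ x r ≤ C₀ * Λ y r)
    {cB cS x : X} {rS : ℝ} (hc : dist cB cS < rS) (hx : 2 * rS ≤ dist x cS) :
    (Λ cB (dist x cB))⁻¹ ≤ Cl * C₀ * (Λ cS (dist x cS))⁻¹ := by
  have hrS : 0 < rS := dist_nonneg.trans_lt hc
  have htri := dist_triangle x cB cS
  have hle : Λ cS (dist x cS) ≤ Cl * C₀ * Λ cB (dist x cB) :=
    dominating_le_mul_of_dist_le hΛpos hΛmono hΛdouble hΛcomp (by linarith)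
      (by rw [dist_comm]; linarith) (by linarith)
  rw [le_mul_inv_iff₀ (hΛpos cS _ (by linarith)), inv_mul_le_iff₀ (hΛpos cB _ (by linarith)),
    mul_comm]
  exact hle

variable [MeasurableSpace X] (μ : Measure X)

lemma measure_ball_ne_top
    (hΛdom : ∀ (x : X) (r : ℝ), 0 < r → μ (ball x r) ≤ ENNReal.ofReal (Λ x r)) (x : X) (r : ℝ) :
    μ (ball x r) ≠ ⊤ := by
  rcases le_or_gt r 0 with hr | hr
  · simp [ball_eq_empty.2 hr]
  · exact ne_top_of_le_ne_top ENNReal.ofReal_ne_top (hΛdom x r hr)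

variable [OpensMeasurableSpace X]

lemma setLIntegral_diff_ball_le (hΛpos : ∀ (x : X) (r : ℝ), 0 < r → 0 < Λ x r)
    (hΛmono : ∀ (x : X) (r s : ℝ), 0 < r → r ≤ s → Λ x r ≤ Λ x s)
    {s : Set X} (hs : MeasurableSet s) (c : X) {r : ℝ} (hr : 0 < r) :
    ∫⁻ x in s \ ball c r, ENNReal.ofReal ((Λ c (dist x c))⁻¹) ∂μ
      ≤ ENNReal.ofReal (Λ c r)⁻¹ * μ s := by
  calc ∫⁻ x in s \ ball c r, ENNReal.ofReal ((Λ c (dist x c))⁻¹) ∂μ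
      ≤ ∫⁻ _ in s \ ball c r, ENNReal.ofReal (Λ c r)⁻¹ ∂μ := by
        refine setLIntegral_mono' (hs.diff measurableSet_ball) fun x hx ↦ ?_
        have hrx : r ≤ dist x c := not_lt.mp hx.2
        exact ENNReal.ofReal_le_ofReal (inv_anti₀ (hΛpos c r hr) (hΛmono c r _ hr hrx))
    _ ≤ ENNReal.ofReal (Λ c r)⁻¹ * μ s := by
        rw [setLIntegral_const]
        gcongr
        exact Set.sdiff_subset

lemma deltaLIntegral_ne_top (hΛpos : ∀ (x : X) (r : ℝ), 0 < r → 0 < Λ x r)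
    (hΛmono : ∀ (x : X) (r s : ℝ), 0 < r → r ≤ s → Λ x r ≤ Λ x s)
    (hΛdom : ∀ (x : X) (r : ℝ), 0 < r → μ (ball x r) ≤ ENNReal.ofReal (Λ x r))
    (cB : X) {rB : ℝ} (hrB : 0 < rB) (cS : X) (rS : ℝ) :
    deltaLIntegral μ Λ cB rB cS rS ≠ ⊤ :=
  ne_top_of_le_ne_top (ENNReal.mul_ne_top ENNReal.ofReal_ne_top (measure_ball_ne_top μ hΛdom _ _))
    (setLIntegral_diff_ball_le μ hΛpos hΛmono measurableSet_ball cB hrB)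

lemma deltaLIntegral_le_add_mul (hΛpos : ∀ (x : X) (r : ℝ), 0 < r → 0 < Λ x r)
    (hΛmono : ∀ (x : X) (r s : ℝ), 0 < r → r ≤ s → Λ x r ≤ Λ x s)
    (hΛdouble : ∀ (x : X) (r : ℝ), 0 < r → Λ x r ≤ Cl * Λ x (r / 2))
    (hΛcomp : ∀ (x y : X) (r : ℝ), 0 < r → dist x y ≤ r → Λ x r ≤ C₀ * Λ y r)
    {cB cS : X} (rB : ℝ) {rS : ℝ} (hc : dist cB cS < rS) (cR : X) (rR : ℝ) :
    deltaLIntegral μ Λ cB rB cR rR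
      ≤ deltaLIntegral μ Λ cB rB cS rS
          + ENNReal.ofReal (Cl * C₀) * deltaLIntegral μ Λ cS rS cR rR := by
  set f := fun x ↦ ENNReal.ofReal ((Λ cB (dist x cB))⁻¹)
  set g := fun x ↦ ENNReal.ofReal ((Λ cS (dist x cS))⁻¹)
  have hrS : 0 < rS := dist_nonneg.trans_lt hc
  have hK : 0 ≤ Cl * C₀ :=
    mul_nonneg (doubling_const_pos hΛpos hΛdouble cB).le (comparison_const_pos hΛpos hΛcomp cB).le
  have hfg : ∀ x ∈ ball cR (2 * rR) \ ball cS (2 * rS), f x ≤ ENNReal.ofReal (Cl * C₀) * g x := by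
    rintro x ⟨-, hx⟩
    rw [← ENNReal.ofReal_mul hK]
    exact ENNReal.ofReal_le_ofReal
      (inv_dominating_le_mul_of_le_dist hΛpos hΛmono hΛdouble hΛcomp hc (not_lt.mp hx))
  calc deltaLIntegral μ Λ cB rB cR rR
      ≤ ∫⁻ x in (ball cS (2 * rS) \ ball cB rB) ∪ (ball cR (2 * rR) \ ball cS (2 * rS)), f x ∂μ :=
        lintegral_mono_set fun x hx ↦ by
          by_cases h : x ∈ ball cS (2 * rS)
          exacts [Or.inl ⟨h, hx.2⟩, Or.inr ⟨hx.1, h⟩]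
    _ ≤ deltaLIntegral μ Λ cB rB cS rS + ∫⁻ x in ball cR (2 * rR) \ ball cS (2 * rS), f x ∂μ :=
        lintegral_union_le _ _ _
    _ ≤ deltaLIntegral μ Λ cB rB cS rS
          + ∫⁻ x in ball cR (2 * rR) \ ball cS (2 * rS), ENNReal.ofReal (Cl * C₀) * g x ∂μ := by
        gcongr 1
        exact setLIntegral_mono' (measurableSet_ball.diff measurableSet_ball) hfg
    _ = deltaLIntegral μ Λ cB rB cS rS
          + ENNReal.ofReal (Cl * C₀) * ∫⁻ x in ball cR (2 * rR) \ ball cS (2 * rS), g x ∂μ := by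
        rw [lintegral_const_mul' _ _ ENNReal.ofReal_ne_top]
    _ ≤ deltaLIntegral μ Λ cB rB cS rS
          + ENNReal.ofReal (Cl * C₀) * deltaLIntegral μ Λ cS rS cR rR := by
        gcongr
        exact lintegral_mono_set (Set.sdiff_subset_sdiff_right (ball_subset_ball (by linarith)))

lemma delta_le_add_mul (hΛpos : ∀ (x : X) (r : ℝ), 0 < r → 0 < Λ x r)
    (hΛmono : ∀ (x : X) (r s : ℝ), 0 < r → r ≤ s → Λ x r ≤ Λ x s)
    (hΛdom : ∀ (x : X) (r : ℝ), 0 < r → μ (ball x r) ≤ ENNReal.ofReal (Λ x r))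
    (hΛdouble : ∀ (x : X) (r : ℝ), 0 < r → Λ x r ≤ Cl * Λ x (r / 2))
    (hΛcomp : ∀ (x y : X) (r : ℝ), 0 < r → dist x y ≤ r → Λ x r ≤ C₀ * Λ y r)
    {cB cS : X} {rB rS : ℝ} (hrB : 0 < rB) (hc : dist cB cS < rS) (cR : X) (rR : ℝ) :
    delta μ Λ cB rB cR rR ≤ delta μ Λ cB rB cS rS + Cl * C₀ * delta μ Λ cS rS cR rR := by
  have hK : 0 ≤ Cl * C₀ :=
    mul_nonneg (doubling_const_pos hΛpos hΛdouble cB).le (comparison_const_pos hΛpos hΛcomp cB).le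
  have hBS := deltaLIntegral_ne_top μ hΛpos hΛmono hΛdom cB hrB cS rS
  have hSR := deltaLIntegral_ne_top μ hΛpos hΛmono hΛdom cS (dist_nonneg.trans_lt hc) cR rR
  have h := ENNReal.toReal_mono
    (ENNReal.add_ne_top.2 ⟨hBS, ENNReal.mul_ne_top ENNReal.ofReal_ne_top hSR⟩)
    (deltaLIntegral_le_add_mul μ hΛpos hΛmono hΛdouble hΛcomp rB hc cR rR)
  rwa [ENNReal.toReal_add hBS (ENNReal.mul_ne_top ENNReal.ofReal_ne_top hSR),
    ENNReal.toReal_mul, ENNReal.toReal_ofReal hK] at h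

end UpperDoubling

/-- In an upper doubling space whose dominating function satisfies
`Λ x r ≤ C₀ * Λ y r` for `dist x y ≤ r`, there is a constant `c` depending only on the space
such that `δ(B, R) ≤ δ(B, S) + c δ(S, R) + c` for all balls `B ⊆ S ⊆ R`. -/
theorem delta_triangle {X : Type*} [MetricSpace X] [MeasurableSpace X] [BorelSpace X]
    (μ : Measure X) (Λ : X → ℝ → ℝ) (Cl C₀ : ℝ)
    (hΛpos : ∀ (x : X) (r : ℝ), 0 < r → 0 < Λ x r)
    (hΛmono : ∀ (x : X) (r s : ℝ), 0 < r → r ≤ s → Λ x r ≤ Λ x s)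
    (hΛdom : ∀ (x : X) (r : ℝ), 0 < r → μ (ball x r) ≤ ENNReal.ofReal (Λ x r))
    (hΛdouble : ∀ (x : X) (r : ℝ), 0 < r → Λ x r ≤ Cl * Λ x (r / 2))
    (hΛcomp : ∀ (x y : X) (r : ℝ), 0 < r → dist x y ≤ r → Λ x r ≤ C₀ * Λ y r) :
    ∃ c : ℝ, 0 < c ∧ ∀ (cB cS cR : X) (rB rS rR : ℝ), 0 < rB → 0 < rS → 0 < rR →
      ball cB rB ⊆ ball cS rS → ball cS rS ⊆ ball cR rR →
      delta μ Λ cB rB cR rR ≤ delta μ Λ cB rB cS rS + c * delta μ Λ cS rS cR rR + c := by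
  refine ⟨max 1 (Cl * C₀), by positivity, fun cB cS cR rB rS rR hrB _ _ hBS _ ↦ ?_⟩
  have hc : dist cB cS < rS := hBS (mem_ball_self hrB)
  have hmain := UpperDoubling.delta_le_add_mul μ hΛpos hΛmono hΛdom hΛdouble hΛcomp hrB hc cR rR
  have hconst : Cl * C₀ * delta μ Λ cS rS cR rR ≤ max 1 (Cl * C₀) * delta μ Λ cS rS cR rR :=
    mul_le_mul_of_nonneg_right (le_max_right _ _) ENNReal.toReal_nonneg
  linarith [le_max_left 1 (Cl * C₀)]
end

section
/- Let (X, d, μ) be an upper doubling, geometrically doubling metric measure space and r ∈ (0,1). If f ∈ RBMO(μ), then the function |f|^r satisfies: for all (6, β₆)-doubling balls B ⊂ S, |m_B(|f|^r) − m_S(|f|^r)| ≤ C (1 + δ(B,S))^r ‖f‖_{RBMO(μ)}^r, where m_B denotes the average over B. -/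
/-!
On a `(6, β)`-doubling ball `B` the oscillation bound gives `m_B |f - f_B| ≤ β K`. Since
`|a^r - b^r| ≤ |a - b|^r` and `t ↦ t^r` is concave, Jensen's inequality yields
`|m_B(|f|^r) - |f_B|^r| ≤ m_B(|f - f_B|^r) ≤ (m_B |f - f_B|)^r ≤ (β K)^r`, and the regularity
condition gives `||f_B|^r - |f_S|^r| ≤ |f_B - f_S|^r ≤ (1 + δ(B, S))^r K^r`. The triangle
inequality through `|f_B|^r` and `|f_S|^r` combines the three estimates.
-/

open Metric MeasureTheory

namespace Real

lemma abs_rpow_sub_rpow_le {x y r : ℝ} (hx : 0 ≤ x) (hy : 0 ≤ y) (hr₀ : 0 ≤ r) (hr₁ : r ≤ 1) :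
    |x ^ r - y ^ r| ≤ |x - y| ^ r := by
  have key : ∀ {u v : ℝ}, 0 ≤ u → 0 ≤ v → u ^ r ≤ |u - v| ^ r + v ^ r := fun {u v} hu hv =>
    calc u ^ r ≤ (|u - v| + v) ^ r := rpow_le_rpow hu (by linarith [le_abs_self (u - v)]) hr₀
      _ ≤ |u - v| ^ r + v ^ r := rpow_add_le_add_rpow (abs_nonneg _) hv hr₀ hr₁
  rw [abs_sub_le_iff]
  constructor
  · linarith [key hx hy]
  · rw [abs_sub_comm]
    linarith [key hy hx]

lemma abs_abs_rpow_sub_abs_rpow_le (a b : ℝ) {r : ℝ} (hr₀ : 0 ≤ r) (hr₁ : r ≤ 1) :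
    |(|a| ^ r - |b| ^ r)| ≤ |a - b| ^ r :=
  (abs_rpow_sub_rpow_le (abs_nonneg a) (abs_nonneg b) hr₀ hr₁).trans <|
    rpow_le_rpow (abs_nonneg _) (abs_abs_sub_abs_le_abs_sub a b) hr₀

end Real

namespace MeasureTheory

variable {α : Type*} [MeasurableSpace α]

lemma Integrable.abs_rpow {μ : Measure α} [IsFiniteMeasure μ] {f : α → ℝ}
    (hf : Integrable f μ) {r : ℝ} (hr₀ : 0 ≤ r) (hr₁ : r ≤ 1) :
    Integrable (fun x => |f x| ^ r) μ := by
  have hmem : MemLp f (ENNReal.ofReal r) μ :=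
    (memLp_one_iff_integrable.2 hf).mono_exponent (ENNReal.ofReal_le_one.2 hr₁)
  simpa only [Real.norm_eq_abs, ENNReal.toReal_ofReal hr₀] using hmem.integrable_norm_rpow'

lemma abs_integral_abs_rpow_sub_le {ν : Measure α} [IsProbabilityMeasure ν] {f : α → ℝ}
    (hf : Integrable f ν) (a : ℝ) {r : ℝ} (hr₀ : 0 ≤ r) (hr₁ : r ≤ 1) :
    |∫ x, |f x| ^ r ∂ν - |a| ^ r| ≤ (∫ x, |f x - a| ∂ν) ^ r := by
  have hfa : Integrable (fun x => f x - a) ν := hf.sub (integrable_const a)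
  have jensen : ∫ x, |f x - a| ^ r ∂ν ≤ (∫ x, |f x - a| ∂ν) ^ r :=
    (Real.concaveOn_rpow hr₀ hr₁).le_map_integral
      ((Real.continuous_rpow_const hr₀).continuousOn) isClosed_Ici
      (Filter.Eventually.of_forall fun x => abs_nonneg (f x - a)) hfa.abs (hfa.abs_rpow hr₀ hr₁)
  calc |∫ x, |f x| ^ r ∂ν - |a| ^ r|
      = |∫ x, (|f x| ^ r - |a| ^ r) ∂ν| := by
        rw [integral_sub (hf.abs_rpow hr₀ hr₁) (integrable_const _), integral_const,
          probReal_univ, one_smul]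
    _ ≤ ∫ x, |(|f x| ^ r - |a| ^ r)| ∂ν := abs_integral_le_integral_abs
    _ ≤ ∫ x, |f x - a| ^ r ∂ν :=
        integral_mono ((hf.abs_rpow hr₀ hr₁).sub (integrable_const _)).abs
          (hfa.abs_rpow hr₀ hr₁) fun x => Real.abs_abs_rpow_sub_abs_rpow_le _ _ hr₀ hr₁
    _ ≤ _ := jensen

lemma abs_setAverage_abs_rpow_sub_le {μ : Measure α} {s : Set α} (h₀ : μ s ≠ 0) (hs : μ s ≠ ⊤)
    {f : α → ℝ} (hf : IntegrableOn f s μ) (a : ℝ) {r : ℝ} (hr₀ : 0 ≤ r) (hr₁ : r ≤ 1) :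
    |(⨍ x in s, |f x| ^ r ∂μ) - |a| ^ r| ≤ (⨍ x in s, |f x - a| ∂μ) ^ r := by
  have : IsProbabilityMeasure ((μ s)⁻¹ • μ.restrict s) :=
    ProbabilityTheory.cond_isProbabilityMeasure_of_finite h₀ hs
  simp only [setAverage_eq']
  exact abs_integral_abs_rpow_sub_le (hf.smul_measure (ENNReal.inv_ne_top.2 h₀)) a hr₀ hr₁

lemma one_le_of_measure_le_ofReal_mul {μ : Measure α} {s t : Set α} (hst : s ⊆ t)
    (h₀ : μ s ≠ 0) (hs : μ s ≠ ⊤) {β : ℝ} (hβ : μ t ≤ ENNReal.ofReal β * μ s) : 1 ≤ β := by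
  have : 1 * μ s ≤ ENNReal.ofReal β * μ s := by rw [one_mul]; exact (measure_mono hst).trans hβ
  exact ENNReal.one_le_ofReal.1 ((ENNReal.mul_le_mul_iff_left h₀ hs).1 this)

lemma setAverage_le_mul_of_setIntegral_le {μ : Measure α} {s t : Set α} (h₀ : μ s ≠ 0)
    (hs : μ s ≠ ⊤) {β K : ℝ} (hβ₀ : 0 ≤ β) (hK : 0 ≤ K) (hβ : μ t ≤ ENNReal.ofReal β * μ s)
    {g : α → ℝ} (hg : ∫ x in s, g x ∂μ ≤ K * μ.real t) :
    ⨍ x in s, g x ∂μ ≤ β * K := by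
  have hpos : 0 < μ.real s := ENNReal.toReal_pos h₀ hs
  have hreal : μ.real t ≤ β * μ.real s := by
    simpa only [measureReal_def, ENNReal.toReal_mul, ENNReal.toReal_ofReal hβ₀] using
      ENNReal.toReal_mono (by finiteness) hβ
  rw [setAverage_eq, smul_eq_mul, inv_mul_le_iff₀ hpos]
  calc ∫ x in s, g x ∂μ ≤ K * μ.real t := hg
    _ ≤ K * (β * μ.real s) := mul_le_mul_of_nonneg_left hreal hK
    _ = μ.real s * (β * K) := by ring

lemma abs_setAverage_abs_rpow_sub_le_of_measure_le {μ : Measure α} {s t : Set α} (hst : s ⊆ t)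
    (h₀ : μ s ≠ 0) (hs : μ s ≠ ⊤) {β K : ℝ} (hK : 0 ≤ K) (hβ : μ t ≤ ENNReal.ofReal β * μ s)
    {f : α → ℝ} (hf : IntegrableOn f s μ) {a : ℝ} (hosc : ∫ x in s, |f x - a| ∂μ ≤ K * μ.real t)
    {r : ℝ} (hr₀ : 0 ≤ r) (hr₁ : r ≤ 1) :
    |(⨍ x in s, |f x| ^ r ∂μ) - |a| ^ r| ≤ β * K ^ r := by
  have hβ₁ : 1 ≤ β := one_le_of_measure_le_ofReal_mul hst h₀ hs hβ
  have havg_nonneg : 0 ≤ ⨍ x in s, |f x - a| ∂μ := by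
    rw [setAverage_eq']
    exact integral_nonneg fun _ => abs_nonneg _
  calc |(⨍ x in s, |f x| ^ r ∂μ) - |a| ^ r| ≤ (⨍ x in s, |f x - a| ∂μ) ^ r :=
        abs_setAverage_abs_rpow_sub_le h₀ hs hf a hr₀ hr₁
    _ ≤ (β * K) ^ r := Real.rpow_le_rpow havg_nonneg
        (setAverage_le_mul_of_setIntegral_le h₀ hs (by linarith) hK hβ hosc) hr₀
    _ = β ^ r * K ^ r := Real.mul_rpow (by linarith) hK
    _ ≤ β * K ^ r := by
        gcongr
        exact Real.rpow_le_self_of_one_le hβ₁ hr₁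

end MeasureTheory

theorem rbmo_rpow_average_difference_general {X : Type*} [MetricSpace X] [MeasurableSpace X]
    (μ : Measure X) (Λ : X → ℝ → ℝ) (β₆ : ℝ)
    (hball : ∀ (x : X) (r : ℝ), 0 < r → 0 < μ (ball x r) ∧ μ (ball x r) < ⊤)
    (r : ℝ) (hr : r ∈ Set.Ioo (0 : ℝ) 1) :
    ∃ C : ℝ, 0 < C ∧ ∀ (f : X → ℝ) (fB : X → ℝ → ℝ) (K : ℝ), 0 ≤ K →
      (∀ (c : X) (ρ : ℝ), 0 < ρ → IntegrableOn f (ball c ρ) μ) →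
      (∀ (c : X) (ρ : ℝ), 0 < ρ →
        ∫ x in ball c ρ, |f x - fB c ρ| ∂μ ≤ K * (μ (ball c (2 * ρ))).toReal) →
      (∀ (c c' : X) (ρ ρ' : ℝ), 0 < ρ → 0 < ρ' → ball c ρ ⊆ ball c' ρ' →
        |fB c ρ - fB c' ρ'| ≤ K * (1 + delta μ Λ c ρ c' ρ')) →
      ∀ (cB cS : X) (rB rS : ℝ), 0 < rB → 0 < rS →
        ball cB rB ⊆ ball cS rS →
        μ (ball cB (6 * rB)) ≤ ENNReal.ofReal β₆ * μ (ball cB rB) →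
        μ (ball cS (6 * rS)) ≤ ENNReal.ofReal β₆ * μ (ball cS rS) →
        |(⨍ x in ball cB rB, |f x| ^ r ∂μ) - ⨍ x in ball cS rS, |f x| ^ r ∂μ| ≤
          C * (1 + delta μ Λ cB rB cS rS) ^ r * K ^ r := by
  obtain ⟨hr₀, hr₁⟩ := hr
  -- `1 ≤ β₆` is only known once a doubling ball is given, after `C` is chosen.
  refine ⟨2 * max β₆ 1 + 1, by positivity, ?_⟩
  intro f fB K hK hint hosc hreg cB cS rB rS hrB hrS hBS hdB hdS
  have on_doubling_ball : ∀ c ρ, 0 < ρ → μ (ball c (6 * ρ)) ≤ ENNReal.ofReal β₆ * μ (ball c ρ) →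
      |(⨍ x in ball c ρ, |f x| ^ r ∂μ) - |fB c ρ| ^ r| ≤ max β₆ 1 * K ^ r := fun c ρ hρ hd =>
    (abs_setAverage_abs_rpow_sub_le_of_measure_le (ball_subset_ball (by linarith))
      (hball c ρ hρ).1.ne' (hball c ρ hρ).2.ne hK
      ((measure_mono (ball_subset_ball (by linarith))).trans hd) (hint c ρ hρ) (hosc c ρ hρ)
      hr₀.le hr₁.le).trans (by gcongr; exact le_max_left _ _)
  set δ := delta μ Λ cB rB cS rS
  have hδ₀ : 0 ≤ δ := ENNReal.toReal_nonneg
  have hδ : 1 ≤ (1 + δ) ^ r := Real.one_le_rpow (by linarith) hr₀.le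
  have hcentres : |(|fB cB rB| ^ r - |fB cS rS| ^ r)| ≤ (1 + δ) ^ r * K ^ r :=
    calc |(|fB cB rB| ^ r - |fB cS rS| ^ r)| ≤ |fB cB rB - fB cS rS| ^ r :=
          Real.abs_abs_rpow_sub_abs_rpow_le _ _ hr₀.le hr₁.le
      _ ≤ (K * (1 + δ)) ^ r := Real.rpow_le_rpow (abs_nonneg _) (hreg _ _ _ _ hrB hrS hBS) hr₀.le
      _ = (1 + δ) ^ r * K ^ r := by rw [Real.mul_rpow hK (by linarith), mul_comm]
  have hB := on_doubling_ball cB rB hrB hdB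
  have hS := on_doubling_ball cS rS hrS hdS
  set mB := ⨍ x in ball cB rB, |f x| ^ r ∂μ
  set mS := ⨍ x in ball cS rS, |f x| ^ r ∂μ
  rw [abs_sub_comm] at hS
  calc |mB - mS| ≤ |mB - |fB cB rB| ^ r| + |(|fB cB rB| ^ r - |fB cS rS| ^ r)|
        + |(|fB cS rS| ^ r - mS)| := by
        linarith [abs_sub_le mB (|fB cB rB| ^ r) (|fB cS rS| ^ r),
          abs_sub_le mB (|fB cS rS| ^ r) mS]
    _ ≤ max β₆ 1 * K ^ r + (1 + δ) ^ r * K ^ r + max β₆ 1 * K ^ r := by gcongr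
    _ ≤ (2 * max β₆ 1 + 1) * (1 + δ) ^ r * K ^ r := by
        have := le_mul_of_one_le_left (by positivity : 0 ≤ K ^ r) hδ
        nlinarith [le_max_right β₆ 1]

/-- For `r ∈ (0,1)` and `f ∈ RBMO(μ)`, the averages of `|f|^r` over `(6, β₆)`-doubling balls
`B ⊆ S` satisfy `|m_B(|f|^r) - m_S(|f|^r)| ≤ C (1 + δ(B,S))^r ‖f‖_{RBMO}^r`. -/
theorem rbmo_rpow_average_difference {X : Type*} [MetricSpace X] [MeasurableSpace X]
    [BorelSpace X] (μ : Measure X) (Λ : X → ℝ → ℝ) (Cl β₆ : ℝ) (N₀ : ℕ)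
    (hΛpos : ∀ (x : X) (r : ℝ), 0 < r → 0 < Λ x r)
    (hΛmono : ∀ (x : X) (r s : ℝ), 0 < r → r ≤ s → Λ x r ≤ Λ x s)
    (hΛdom : ∀ (x : X) (r : ℝ), 0 < r → μ (ball x r) ≤ ENNReal.ofReal (Λ x r))
    (hΛdouble : ∀ (x : X) (r : ℝ), 0 < r → Λ x r ≤ Cl * Λ x (r / 2))
    (hgd : ∀ (x : X) (r : ℝ), ∃ s : Finset X,
      s.card ≤ N₀ ∧ ball x r ⊆ ⋃ y ∈ s, ball y (r / 2))
    (hball : ∀ (x : X) (r : ℝ), 0 < r → 0 < μ (ball x r) ∧ μ (ball x r) < ⊤)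
    (r : ℝ) (hr : r ∈ Set.Ioo (0 : ℝ) 1) :
    ∃ C : ℝ, 0 < C ∧ ∀ (f : X → ℝ) (fB : X → ℝ → ℝ) (K : ℝ), 0 ≤ K →
      (∀ (c : X) (ρ : ℝ), 0 < ρ → IntegrableOn f (ball c ρ) μ) →
      (∀ (c : X) (ρ : ℝ), 0 < ρ →
        ∫ x in ball c ρ, |f x - fB c ρ| ∂μ ≤ K * (μ (ball c (2 * ρ))).toReal) →
      (∀ (c c' : X) (ρ ρ' : ℝ), 0 < ρ → 0 < ρ' → ball c ρ ⊆ ball c' ρ' →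
        |fB c ρ - fB c' ρ'| ≤ K * (1 + delta μ Λ c ρ c' ρ')) →
      ∀ (cB cS : X) (rB rS : ℝ), 0 < rB → 0 < rS →
        ball cB rB ⊆ ball cS rS →
        μ (ball cB (6 * rB)) ≤ ENNReal.ofReal β₆ * μ (ball cB rB) →
        μ (ball cS (6 * rS)) ≤ ENNReal.ofReal β₆ * μ (ball cS rS) →
        |(⨍ x in ball cB rB, |f x| ^ r ∂μ) - ⨍ x in ball cS rS, |f x| ^ r ∂μ| ≤
          C * (1 + delta μ Λ cB rB cS rS) ^ r * K ^ r :=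
  rbmo_rpow_average_difference_general μ Λ β₆ hball r hr
end

section
/- (Lemma 3.2) Let (X, d, μ) be an upper doubling, geometrically doubling metric measure space, p ∈ [1,∞), and f ∈ L¹_loc(μ) with ∫_X f dμ = 0 when μ(X) < ∞. Assume the good-λ inequality: for some ν ∈ (0,1) and each ε > 0 there is δ > 0 such that for all ℓ > 0, μ({N(f) > (1+ε)ℓ, M♯(f) ≤ δℓ}) ≤ ν μ({N(f) > ℓ}). If sup_{0<ℓ<R} ℓ^p μ({N(f) > ℓ}) < ∞ for every R > 0, then sup_{ℓ>0} ℓ^p μ({N(f) > ℓ}) ≤ C sup_{ℓ>0} ℓ^p μ({M♯(f) > ℓ}). -/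
/-
The good-λ inequality converts into `G((1+ε)ℓ) ≤ (1+ε)^p ν G(ℓ) + (1+ε)^p δ^{-p} T` for the weak-type
profile `G(ℓ) = ℓ^p μ{N f > ℓ}` of `N f` and `T = sup_ℓ ℓ^p μ{M♯ f > ℓ}`. Taking the supremum over
`ℓ < R` bounds `sup_{ℓ<R} G` by `(1+ε)^p ν` times itself plus a multiple of `T`; once `ε` is so small
that `(1+ε)^p ν < 1`, the finiteness of `sup_{ℓ<R} G` lets this be absorbed, uniformly in `R`.
-/

open Metric MeasureTheory
open scoped ENNReal

open scoped Classical in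
/-- The exponent of the smallest `(6, β₆)`-doubling dilate `6^j B` of the ball `B(c, r)`. -/
noncomputable def tilde6 {X : Type*} [MetricSpace X] [MeasurableSpace X]
    (μ : Measure X) (β₆ : ℝ) (c : X) (r : ℝ) : ℕ :=
  if h : ∃ j : ℕ, μ (ball c (6 ^ (j + 1) * r)) ≤ ENNReal.ofReal β₆ * μ (ball c (6 ^ j * r))
  then Nat.find h else 0

/-- The sharp maximal function `M♯(f)` on a non-homogeneous metric measure space. -/
noncomputable def msharp {X : Type*} [MetricSpace X] [MeasurableSpace X]
    (μ : Measure X) (Λ : X → ℝ → ℝ) (β₆ : ℝ) (f : X → ℝ) (x : X) : ℝ≥0∞ :=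
  (⨆ (c : X) (r : ℝ) (_ : 0 < r ∧ x ∈ ball c r),
    ENNReal.ofReal ((∫ y in ball c r,
        |f y - ⨍ z in ball c (6 ^ tilde6 μ β₆ c r * r), f z ∂μ| ∂μ) /
      (μ (ball c (5 * r))).toReal)) ⊔
  (⨆ (cB : X) (rB : ℝ) (cS : X) (rS : ℝ)
      (_ : 0 < rB ∧ 0 < rS ∧ x ∈ ball cB rB ∧ ball cB rB ⊆ ball cS rS ∧
        μ (ball cB (6 * rB)) ≤ ENNReal.ofReal β₆ * μ (ball cB rB) ∧
        μ (ball cS (6 * rS)) ≤ ENNReal.ofReal β₆ * μ (ball cS rS)),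
    ENNReal.ofReal (|(⨍ z in ball cB rB, f z ∂μ) - ⨍ z in ball cS rS, f z ∂μ| /
      (1 + delta μ Λ cB rB cS rS)))

/-- The doubling Hardy-Littlewood maximal function `N(f)`: supremum of averages of `|f|` over
`(6, β₆)`-doubling balls containing the point. -/
noncomputable def nmax {X : Type*} [MetricSpace X] [MeasurableSpace X]
    (μ : Measure X) (β₆ : ℝ) (f : X → ℝ) (x : X) : ℝ≥0∞ :=
  ⨆ (c : X) (r : ℝ)
    (_ : 0 < r ∧ x ∈ ball c r ∧ μ (ball c (6 * r)) ≤ ENNReal.ofReal β₆ * μ (ball c r)),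
    (∫⁻ y in ball c r, ENNReal.ofReal |f y| ∂μ) / μ (ball c r)

open Set Filter Topology

theorem exists_pos_one_add_rpow_mul_lt_one {ν : ℝ} (hν : ν < 1) (p : ℝ) :
    ∃ ε : ℝ, 0 < ε ∧ (1 + ε) ^ p * ν < 1 := by
  have hlim : Tendsto (fun ε : ℝ => (1 + ε) ^ p * ν) (𝓝[>] 0) (𝓝 ν) := by
    have hcont : ContinuousAt (fun ε : ℝ => (1 + ε) ^ p * ν) 0 :=
      ((continuousAt_const.add continuousAt_id).rpow_const (by norm_num)).mul continuousAt_const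
    simpa using hcont.tendsto.mono_left nhdsWithin_le_nhds
  exact ((hlim.eventually (gt_mem_nhds hν)).and self_mem_nhdsWithin).exists.imp
    fun ε h => ⟨h.2, h.1⟩

theorem ENNReal.le_ofReal_div_mul_of_le_ofReal_mul_add {F T : ℝ≥0∞} {θ κ : ℝ} (hF : F ≠ ⊤)
    (hθ₀ : 0 ≤ θ) (hθ : θ < 1) (h : F ≤ ENNReal.ofReal θ * F + ENNReal.ofReal κ * T) :
    F ≤ ENNReal.ofReal (κ / (1 - θ)) * T := by
  have hθ' : ENNReal.ofReal θ < 1 := ENNReal.ofReal_lt_one.mpr hθ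
  have habsorb : (1 - ENNReal.ofReal θ) * F ≤ ENNReal.ofReal κ * T := by
    rw [ENNReal.sub_mul fun _ _ => hF, one_mul]
    exact tsub_le_iff_left.mpr h
  rw [ENNReal.ofReal_div_of_pos (sub_pos.mpr hθ), ENNReal.ofReal_sub 1 hθ₀, ENNReal.ofReal_one,
    div_eq_mul_inv, mul_right_comm, ← div_eq_mul_inv,
    ENNReal.le_div_iff_mul_le (Or.inl (tsub_pos_of_lt hθ').ne')
      (Or.inl (ENNReal.sub_ne_top ENNReal.one_ne_top)), mul_comm]
  exact habsorb

theorem iSup_pos_le_of_le_mul_add {G : ℝ → ℝ≥0∞} {s θ κ : ℝ} {T : ℝ≥0∞} (hs : 1 ≤ s)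
    (hθ₀ : 0 ≤ θ) (hθ : θ < 1)
    (hG : ∀ ℓ : ℝ, 0 < ℓ → G (s * ℓ) ≤ ENNReal.ofReal θ * G ℓ + ENNReal.ofReal κ * T)
    (hfin : ∀ R : ℝ, 0 < R → (⨆ (ℓ : ℝ) (_ : ℓ ∈ Ioo 0 R), G ℓ) < ⊤) :
    (⨆ (ℓ : ℝ) (_ : 0 < ℓ), G ℓ) ≤ ENNReal.ofReal (κ / (1 - θ)) * T := by
  have hs0 : 0 < s := one_pos.trans_le hs
  have hR : ∀ R : ℝ, 0 < R →
      (⨆ (ℓ : ℝ) (_ : ℓ ∈ Ioo 0 R), G ℓ) ≤ ENNReal.ofReal (κ / (1 - θ)) * T := by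
    intro R hR
    refine ENNReal.le_ofReal_div_mul_of_le_ofReal_mul_add (hfin R hR).ne hθ₀ hθ ?_
    refine iSup₂_le fun ℓ hℓ => ?_
    have hℓs : ℓ / s ∈ Ioo 0 R :=
      ⟨div_pos hℓ.1 hs0, (div_le_self hℓ.1.le hs).trans_lt hℓ.2⟩
    calc G ℓ = G (s * (ℓ / s)) := by rw [mul_div_cancel₀ ℓ hs0.ne']
      _ ≤ ENNReal.ofReal θ * G (ℓ / s) + ENNReal.ofReal κ * T := hG _ hℓs.1
      _ ≤ _ := by gcongr; exact le_iSup₂_of_le (ℓ / s) hℓs le_rfl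
  exact iSup₂_le fun ℓ hℓ =>
    (le_iSup₂_of_le ℓ ⟨hℓ, lt_add_one ℓ⟩ le_rfl).trans (hR (ℓ + 1) (by linarith))

noncomputable def weakLpLevel {X : Type*} [MeasurableSpace X] (μ : Measure X) (p : ℝ)
    (g : X → ℝ≥0∞) (ℓ : ℝ) : ℝ≥0∞ :=
  ENNReal.ofReal (ℓ ^ p) * μ {x | ENNReal.ofReal ℓ < g x}

theorem weakLpLevel_mul_le {X : Type*} [MeasurableSpace X] {μ : Measure X} {p : ℝ}
    {g k : X → ℝ≥0∞} {s ν δ ℓ : ℝ} (hs : 0 ≤ s) (hδ : 0 < δ) (hℓ : 0 < ℓ)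
    (hgl : μ ({x | ENNReal.ofReal (s * ℓ) < g x} ∩ {x | k x ≤ ENNReal.ofReal (δ * ℓ)}) ≤
      ENNReal.ofReal ν * μ {x | ENNReal.ofReal ℓ < g x}) :
    weakLpLevel μ p g (s * ℓ) ≤ ENNReal.ofReal (s ^ p * ν) * weakLpLevel μ p g ℓ +
      ENNReal.ofReal (s ^ p / δ ^ p) * weakLpLevel μ p k (δ * ℓ) := by
  have hsplit : μ {x | ENNReal.ofReal (s * ℓ) < g x} ≤
      ENNReal.ofReal ν * μ {x | ENNReal.ofReal ℓ < g x} +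
        μ {x | ENNReal.ofReal (δ * ℓ) < k x} := by
    refine (measure_le_inter_add_sdiff μ _ {x | k x ≤ ENNReal.ofReal (δ * ℓ)}).trans
      (add_le_add hgl (measure_mono fun x hx => ?_))
    simpa using hx.2
  have hscale_k : ENNReal.ofReal ((s * ℓ) ^ p) =
      ENNReal.ofReal (s ^ p / δ ^ p) * ENNReal.ofReal ((δ * ℓ) ^ p) := by
    have hδp : δ ^ p ≠ 0 := (Real.rpow_pos_of_pos hδ p).ne'
    rw [← ENNReal.ofReal_mul (by positivity), Real.mul_rpow hs hℓ.le, Real.mul_rpow hδ.le hℓ.le]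
    field_simp
  have hscale_g : ENNReal.ofReal ((s * ℓ) ^ p) * ENNReal.ofReal ν =
      ENNReal.ofReal (s ^ p * ν) * ENNReal.ofReal (ℓ ^ p) := by
    rw [← ENNReal.ofReal_mul (by positivity), ← ENNReal.ofReal_mul' (by positivity),
      Real.mul_rpow hs hℓ.le]
    ring_nf
  calc weakLpLevel μ p g (s * ℓ)
      ≤ ENNReal.ofReal ((s * ℓ) ^ p) * (ENNReal.ofReal ν * μ {x | ENNReal.ofReal ℓ < g x} +
          μ {x | ENNReal.ofReal (δ * ℓ) < k x}) := by
        unfold weakLpLevel; gcongr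
    _ = _ := by
        rw [mul_add, ← mul_assoc, hscale_g, hscale_k, weakLpLevel, weakLpLevel, mul_assoc, mul_assoc]

theorem weak_type_nmax_le_msharp_general {X : Type*} [MetricSpace X] [MeasurableSpace X]
    (μ : Measure X) (Λ : X → ℝ → ℝ) (β₆ : ℝ)
    (p : ℝ) (f : X → ℝ)
    (hgl : ∃ ν ∈ Set.Ioo (0 : ℝ) 1, ∀ ε : ℝ, 0 < ε → ∃ δ : ℝ, 0 < δ ∧ ∀ ℓ : ℝ, 0 < ℓ →
      μ ({x | ENNReal.ofReal ((1 + ε) * ℓ) < nmax μ β₆ f x} ∩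
          {x | msharp μ Λ β₆ f x ≤ ENNReal.ofReal (δ * ℓ)}) ≤
        ENNReal.ofReal ν * μ {x | ENNReal.ofReal ℓ < nmax μ β₆ f x})
    (hfin : ∀ R : ℝ, 0 < R →
      (⨆ (ℓ : ℝ) (_ : ℓ ∈ Set.Ioo 0 R),
        ENNReal.ofReal (ℓ ^ p) * μ {x | ENNReal.ofReal ℓ < nmax μ β₆ f x}) < ⊤) :
    ∃ C : ℝ, 0 < C ∧
      (⨆ (ℓ : ℝ) (_ : 0 < ℓ),
          ENNReal.ofReal (ℓ ^ p) * μ {x | ENNReal.ofReal ℓ < nmax μ β₆ f x}) ≤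
        ENNReal.ofReal C *
          ⨆ (ℓ : ℝ) (_ : 0 < ℓ),
            ENNReal.ofReal (ℓ ^ p) * μ {x | ENNReal.ofReal ℓ < msharp μ Λ β₆ f x} := by
  obtain ⟨ν, ⟨hν₀, hν₁⟩, hgl⟩ := hgl
  obtain ⟨ε, hε, hθ⟩ := exists_pos_one_add_rpow_mul_lt_one hν₁ p
  obtain ⟨δ, hδ, hgl⟩ := hgl ε hε
  have hs : 0 < 1 + ε := by linarith
  have hsp := Real.rpow_pos_of_pos hs p
  have hδp := Real.rpow_pos_of_pos hδ p
  refine ⟨(1 + ε) ^ p / δ ^ p / (1 - (1 + ε) ^ p * ν),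
    div_pos (div_pos hsp hδp) (sub_pos.mpr hθ), ?_⟩
  refine iSup_pos_le_of_le_mul_add (G := weakLpLevel μ p (nmax μ β₆ f))
    (le_add_of_nonneg_right hε.le) (mul_nonneg hsp.le hν₀.le) hθ (fun ℓ hℓ => ?_) hfin
  refine (weakLpLevel_mul_le hs.le hδ hℓ (hgl ℓ hℓ)).trans ?_
  gcongr
  exact le_iSup₂_of_le (δ * ℓ) (mul_pos hδ hℓ) le_rfl

/-- (Lemma 3.2) If the good-λ inequality relating `N(f)` and `M♯(f)` holds and the weak-type
quantity for `N(f)` is finite at every finite level, then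
`sup_{ℓ>0} ℓ^p μ({N f > ℓ}) ≤ C sup_{ℓ>0} ℓ^p μ({M♯ f > ℓ})`. -/
theorem weak_type_nmax_le_msharp {X : Type*} [MetricSpace X] [MeasurableSpace X]
    [BorelSpace X] (μ : Measure X) (Λ : X → ℝ → ℝ) (Cl β₆ : ℝ) (N₀ : ℕ)
    (hΛpos : ∀ (x : X) (r : ℝ), 0 < r → 0 < Λ x r)
    (hΛmono : ∀ (x : X) (r s : ℝ), 0 < r → r ≤ s → Λ x r ≤ Λ x s)
    (hΛdom : ∀ (x : X) (r : ℝ), 0 < r → μ (ball x r) ≤ ENNReal.ofReal (Λ x r))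
    (hΛdouble : ∀ (x : X) (r : ℝ), 0 < r → Λ x r ≤ Cl * Λ x (r / 2))
    (hgd : ∀ (x : X) (r : ℝ), ∃ s : Finset X,
      s.card ≤ N₀ ∧ ball x r ⊆ ⋃ y ∈ s, ball y (r / 2))
    (p : ℝ) (hp : 1 ≤ p) (f : X → ℝ) (hf : LocallyIntegrable f μ)
    (hmean : μ Set.univ < ⊤ → ∫ x, f x ∂μ = 0)
    (hgl : ∃ ν ∈ Set.Ioo (0 : ℝ) 1, ∀ ε : ℝ, 0 < ε → ∃ δ : ℝ, 0 < δ ∧ ∀ ℓ : ℝ, 0 < ℓ →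
      μ ({x | ENNReal.ofReal ((1 + ε) * ℓ) < nmax μ β₆ f x} ∩
          {x | msharp μ Λ β₆ f x ≤ ENNReal.ofReal (δ * ℓ)}) ≤
        ENNReal.ofReal ν * μ {x | ENNReal.ofReal ℓ < nmax μ β₆ f x})
    (hfin : ∀ R : ℝ, 0 < R →
      (⨆ (ℓ : ℝ) (_ : ℓ ∈ Set.Ioo 0 R),
        ENNReal.ofReal (ℓ ^ p) * μ {x | ENNReal.ofReal ℓ < nmax μ β₆ f x}) < ⊤) :
    ∃ C : ℝ, 0 < C ∧
      (⨆ (ℓ : ℝ) (_ : 0 < ℓ),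
          ENNReal.ofReal (ℓ ^ p) * μ {x | ENNReal.ofReal ℓ < nmax μ β₆ f x}) ≤
        ENNReal.ofReal C *
          ⨆ (ℓ : ℝ) (_ : 0 < ℓ),
            ENNReal.ofReal (ℓ ^ p) * μ {x | ENNReal.ofReal ℓ < msharp μ Λ β₆ f x} :=
  weak_type_nmax_le_msharp_general μ Λ β₆ p f hgl hfin
end

section
/- Let (X, d, μ) be an upper doubling, geometrically doubling metric measure space with μ(X) < ∞, and let T be sublinear and bounded from H¹(μ) to L^{1,∞}(μ) with ∫_X |T1|^r dμ < ∞ for some r ∈ (0,1). If g ∈ L^∞(μ) with ‖g‖_{L^∞(μ)} ≤ ℓ, then (1/μ(X)) ∫_X |Tg(x)|^r dμ(x) ≤ C ℓ^r, where C depends on μ(X), r, and the operator norms. -/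
/-! Since `X` need not be a ball, a bounded `f` of mean zero is cut along a partition of `X` into
pieces `A j` of balls around one point with `μ (A j) ≲ 2 ^ (-j q)`. Each `f • 1_{A j}`, minus its
integral spread over a fixed ball of positive measure, is an atomic block of size
`≲ ‖f‖_∞ 2 ^ (-j)`, and the subtracted terms sum to `∫ f = 0`; hence `‖f‖_{H¹} ≲ ‖f‖_∞`.
For `f = g - ⨍ g` the weak-type bound for `T` gives `μ {2 ^ n ℓ < |T f|} ≲ 2 ^ (-n)`, so
`∫ |T f| ^ r ≤ ℓ ^ r μ X + ∑ (2 ^ (n + 1) ℓ) ^ r μ {2 ^ n ℓ < |T f|}` converges for `r < 1`, and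
sublinearity adds `ℓ ^ r ∫ |T 1| ^ r`. -/

open Metric MeasureTheory
open scoped ENNReal

/-- `b` is a `(q,1)_λ`-atomic block with coefficient sum `M`. -/
def IsAtomicBlock {X : Type*} [MetricSpace X] [MeasurableSpace X]
    (μ : Measure X) (Λ : X → ℝ → ℝ) (ρ q : ℝ) (b : X → ℝ) (M : ℝ) : Prop :=
  ∃ (cB c₁ c₂ : X) (rB r₁ r₂ l₁ l₂ : ℝ) (a₁ a₂ : X → ℝ),
    0 < rB ∧ 0 < r₁ ∧ 0 < r₂ ∧
    ball c₁ r₁ ⊆ ball cB rB ∧ ball c₂ r₂ ⊆ ball cB rB ∧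
    Function.support b ⊆ ball cB rB ∧
    Function.support a₁ ⊆ ball c₁ r₁ ∧ Function.support a₂ ⊆ ball c₂ r₂ ∧
    Integrable b μ ∧ (∫ x, b x ∂μ) = 0 ∧
    (∀ x, b x = l₁ * a₁ x + l₂ * a₂ x) ∧
    eLpNorm a₁ (ENNReal.ofReal q) μ ≤
      (μ (ball c₁ (ρ * r₁))) ^ (1 / q - 1) *
        (ENNReal.ofReal (1 + delta μ Λ c₁ r₁ cB rB))⁻¹ ∧
    eLpNorm a₂ (ENNReal.ofReal q) μ ≤
      (μ (ball c₂ (ρ * r₂))) ^ (1 / q - 1) *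
        (ENNReal.ofReal (1 + delta μ Λ c₂ r₂ cB rB))⁻¹ ∧
    M = |l₁| + |l₂|

/-- The atomic Hardy space norm `‖f‖_{H¹(μ)}` (value `⊤` if `f ∉ H¹(μ)`). -/
noncomputable def H1Norm {X : Type*} [MetricSpace X] [MeasurableSpace X]
    (μ : Measure X) (Λ : X → ℝ → ℝ) (ρ q : ℝ) (f : X → ℝ) : ℝ≥0∞ :=
  ⨅ (d : {bM : (ℕ → X → ℝ) × (ℕ → ℝ) //
      (∀ j, IsAtomicBlock μ Λ ρ q (bM.1 j) (bM.2 j)) ∧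
      ∀ᵐ x ∂μ, HasSum (fun j => bM.1 j x) (f x)}),
    ∑' j, ENNReal.ofReal (d.1.2 j)

open Filter Topology Set

lemma eLpNorm_indicator_const_ofReal {α : Type*} [MeasurableSpace α] {μ : Measure α} {s : Set α}
    (hs : MeasurableSet s) (hμs : μ s ≠ ⊤) {c q : ℝ} (hc : 0 ≤ c) (hq : 0 < q) :
    eLpNorm (s.indicator fun _ => c) (ENNReal.ofReal q) μ =
      ENNReal.ofReal (c * μ.real s ^ (1 / q)) := by
  rw [eLpNorm_indicator_const hs (by simpa using hq) ENNReal.ofReal_ne_top,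
    ENNReal.toReal_ofReal hq.le, Real.enorm_eq_ofReal hc, ENNReal.ofReal_mul hc, measureReal_def,
    ← ENNReal.ofReal_rpow_of_nonneg ENNReal.toReal_nonneg (by positivity),
    ENNReal.ofReal_toReal hμs]

lemma eLpNorm_indicator_le_ofReal {α : Type*} [MeasurableSpace α] {μ : Measure α} {s : Set α}
    (hs : MeasurableSet s) (hμs : μ s ≠ ⊤) {f : α → ℝ} {ℓ q : ℝ} (hℓ : 0 ≤ ℓ) (hq : 0 < q)
    (hf : ∀ x ∈ s, |f x| ≤ ℓ) :
    eLpNorm (s.indicator f) (ENNReal.ofReal q) μ ≤ ENNReal.ofReal (ℓ * μ.real s ^ (1 / q)) := by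
  rw [← eLpNorm_indicator_const_ofReal hs hμs hℓ hq]
  refine eLpNorm_mono fun x => ?_
  by_cases hx : x ∈ s <;> simp [hx, hf x, abs_of_nonneg hℓ]

section

variable {X : Type*} [MeasurableSpace X] {μ : Measure X}

section Metric

variable [MetricSpace X]

lemma exists_measure_ball_ne_zero (hμ : μ univ ≠ 0) :
    ∃ (x₀ : X) (R₀ : ℝ), 0 < R₀ ∧ μ (ball x₀ R₀) ≠ 0 := by
  obtain ⟨x₀⟩ : Nonempty X := nonempty_iff_univ_nonempty.2 (nonempty_of_measure_ne_zero hμ)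
  by_contra! h
  exact hμ (by simpa [iUnion_ball_nat_succ] using
    measure_iUnion_null fun n : ℕ => h x₀ (n + 1) (by positivity))

variable (μ) [IsFiniteMeasure μ] [OpensMeasurableSpace X]

lemma tendsto_measure_compl_ball_atTop (x₀ : X) :
    Tendsto (fun t => μ (ball x₀ t)ᶜ) atTop (𝓝 0) := by
  have hcover : ⋃ t : ℝ, ball x₀ t = univ :=
    eq_univ_of_forall fun x => mem_iUnion.2 ⟨dist x x₀ + 1, mem_ball.2 (lt_add_one _)⟩
  have h := tendsto_measure_iInter_atTop (μ := μ) (s := fun t : ℝ => (ball x₀ t)ᶜ)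
    (fun _ => measurableSet_ball.compl.nullMeasurableSet)
    (fun _ _ hst => compl_subset_compl.2 (ball_subset_ball hst)) ⟨0, measure_ne_top _ _⟩
  rwa [← compl_iUnion, hcover, compl_univ, measure_empty] at h

lemma exists_partition_subset_balls (x₀ : X) (R₀ : ℝ) {ε : ℕ → ℝ≥0∞} (hε : ∀ j, ε j ≠ 0) :
    ∃ (A : ℕ → Set X) (R : ℕ → ℝ), (∀ j, MeasurableSet (A j)) ∧
      Pairwise (Function.onFun Disjoint A) ∧ ⋃ j, A j = univ ∧
      (∀ j, R₀ ≤ R j ∧ A j ⊆ ball x₀ (R j)) ∧ ∀ j, μ (A (j + 1)) ≤ ε j := by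
  have hR : ∀ j : ℕ, ∃ t, μ (ball x₀ t)ᶜ < ε j ∧ max R₀ j ≤ t := fun j =>
    (((tendsto_measure_compl_ball_atTop μ x₀).eventually
      (gt_mem_nhds (pos_iff_ne_zero.2 (hε j)))).and (eventually_ge_atTop _)).exists
  choose R hRε hRge using hR
  refine ⟨disjointed fun j => ball x₀ (R j), R,
    MeasurableSet.disjointed fun _ => measurableSet_ball, disjoint_disjointed _, ?_,
    fun j => ⟨le_of_max_le_left (hRge j), disjointed_subset _ j⟩,
    fun j => ?_⟩
  · refine iUnion_disjointed.trans (eq_univ_of_forall fun x => ?_)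
    obtain ⟨j, hj⟩ := exists_nat_gt (dist x x₀)
    exact mem_iUnion.2 ⟨j, mem_ball.2 (hj.trans_le (le_of_max_le_right (hRge j)))⟩
  · refine (measure_mono fun x hx => ?_).trans (hRε j).le
    rw [disjointed_eq_inter_compl] at hx
    exact mem_iInter₂.1 hx.2 j (Nat.lt_succ_self j)

end Metric

/-- Since `μ X ^ (1 / q - 1) ≤ μ (ρ B) ^ (1 / q - 1)` and `δ(B, S) ≤ μ X / Λ x₀ R₀`, this is an
admissible `L^q` norm for an atom on any ball `B ⊆ S` centred at `x₀` of radius at least `R₀`. -/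
noncomputable def concentricAtomBound (μ : Measure X) (Λ : X → ℝ → ℝ) (q : ℝ) (x₀ : X) (R₀ : ℝ) :
    ℝ :=
  μ.real univ ^ (1 / q - 1) * (1 + μ.real univ / Λ x₀ R₀)⁻¹

section Blocks

variable [IsFiniteMeasure μ] {Λ : X → ℝ → ℝ}

lemma concentricAtomBound_pos (hμ : μ univ ≠ 0) {q : ℝ} {x₀ : X} {R₀ : ℝ} (hΛ : 0 < Λ x₀ R₀) :
    0 < concentricAtomBound μ Λ q x₀ R₀ := by
  have : 0 < μ.real univ := ENNReal.toReal_pos hμ (measure_ne_top _ _)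
  unfold concentricAtomBound
  positivity

variable [MetricSpace X] [OpensMeasurableSpace X]

lemma delta_le_measureReal_univ_div {c : X} {r : ℝ} (c' : X) (s : ℝ) (hΛr : 0 < Λ c r)
    (hΛmono : ∀ t, r ≤ t → Λ c r ≤ Λ c t) :
    delta μ Λ c r c' s ≤ μ.real univ / Λ c r := by
  have hle : ∫⁻ x in ball c' (2 * s) \ ball c r, ENNReal.ofReal (Λ c (dist x c))⁻¹ ∂μ ≤
      ENNReal.ofReal (Λ c r)⁻¹ * μ univ :=
    calc _ ≤ ∫⁻ _ in ball c' (2 * s) \ ball c r, ENNReal.ofReal (Λ c r)⁻¹ ∂μ :=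
          setLIntegral_mono' (measurableSet_ball.diff measurableSet_ball) fun x hx =>
            ENNReal.ofReal_le_ofReal (inv_anti₀ hΛr (hΛmono _ (not_lt.1 (hx.2 ∘ mem_ball.2))))
      _ ≤ _ := by rw [setLIntegral_const]; gcongr; exact subset_univ _
  calc delta μ Λ c r c' s ≤ (ENNReal.ofReal (Λ c r)⁻¹ * μ univ).toReal :=
        ENNReal.toReal_mono (by finiteness) hle
    _ = μ.real univ / Λ c r := by
        rw [ENNReal.toReal_mul, ENNReal.toReal_ofReal (inv_nonneg.2 hΛr.le), measureReal_def,
          div_eq_inv_mul]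

variable {q : ℝ}

lemma ofReal_concentricAtomBound_le (hμ : μ univ ≠ 0) (hq : 1 ≤ q)
    (hΛpos : ∀ (x : X) (r : ℝ), 0 < r → 0 < Λ x r)
    (hΛmono : ∀ (x : X) (r s : ℝ), 0 < r → r ≤ s → Λ x r ≤ Λ x s)
    {x₀ : X} {R₀ R : ℝ} (hR₀ : 0 < R₀) (hR : R₀ ≤ R)
    (c : X) (t : ℝ) (c' : X) (s : ℝ) :
    ENNReal.ofReal (concentricAtomBound μ Λ q x₀ R₀) ≤
      μ (ball c t) ^ (1 / q - 1) * (ENNReal.ofReal (1 + delta μ Λ x₀ R c' s))⁻¹ := by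
  have hΛ := hΛpos x₀ R₀ hR₀
  have hΛR : Λ x₀ R₀ ≤ Λ x₀ R := hΛmono x₀ R₀ R hR₀ hR
  have hδ : delta μ Λ x₀ R c' s ≤ μ.real univ / Λ x₀ R₀ :=
    (delta_le_measureReal_univ_div c' s (hΛ.trans_le hΛR)
      fun u hu => hΛmono x₀ R u (hR₀.trans_le hR) hu).trans
      (div_le_div_of_nonneg_left measureReal_nonneg hΛ hΛR)
  have hδ0 : 0 ≤ delta μ Λ x₀ R c' s := ENNReal.toReal_nonneg
  have hμ' : 0 < μ.real univ := ENNReal.toReal_pos hμ (measure_ne_top _ _)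
  rw [concentricAtomBound, ENNReal.ofReal_mul (by positivity),
    ENNReal.ofReal_inv_of_pos (by positivity)]
  gcongr
  rw [← ENNReal.ofReal_rpow_of_pos hμ', measureReal_def, ENNReal.ofReal_toReal (measure_ne_top _ _),
    show 1 / q - 1 = -(1 - 1 / q) by ring, ENNReal.rpow_neg, ENNReal.rpow_neg]
  have : 0 ≤ 1 - 1 / q := by
    rw [sub_nonneg, div_le_one (by linarith)]; exact hq
  gcongr
  exact subset_univ _

lemma isAtomicBlock_of_concentric (hμ : μ univ ≠ 0) (hq : 1 ≤ q)
    (hΛpos : ∀ (x : X) (r : ℝ), 0 < r → 0 < Λ x r)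
    (hΛmono : ∀ (x : X) (r s : ℝ), 0 < r → r ≤ s → Λ x r ≤ Λ x s) (ρ : ℝ) {x₀ : X} {R₀ R : ℝ}
    (hR₀ : 0 < R₀) (hR : R₀ ≤ R) {b a₁ a₂ : X → ℝ} {l₁ l₂ : ℝ}
    (ha₁ : Function.support a₁ ⊆ ball x₀ R)
    (ha₂ : Function.support a₂ ⊆ ball x₀ R₀) (hb : ∀ x, b x = l₁ * a₁ x + l₂ * a₂ x)
    (hbi : Integrable b μ) (hb0 : ∫ x, b x ∂μ = 0)
    (ha₁q : eLpNorm a₁ (ENNReal.ofReal q) μ ≤ ENNReal.ofReal (concentricAtomBound μ Λ q x₀ R₀))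
    (ha₂q : eLpNorm a₂ (ENNReal.ofReal q) μ ≤ ENNReal.ofReal (concentricAtomBound μ Λ q x₀ R₀)) :
    IsAtomicBlock μ Λ ρ q b (|l₁| + |l₂|) := by
  refine ⟨x₀, x₀, x₀, R, R, R₀, l₁, l₂, a₁, a₂, hR₀.trans_le hR, hR₀.trans_le hR, hR₀, subset_rfl,
    ball_subset_ball hR, ?_, ha₁, ha₂, hbi, hb0, hb,
    ha₁q.trans (ofReal_concentricAtomBound_le hμ hq hΛpos hΛmono hR₀ hR _ _ _ _),
    ha₂q.trans (ofReal_concentricAtomBound_le hμ hq hΛpos hΛmono hR₀ le_rfl _ _ _ _), rfl⟩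
  refine Function.support_subset_iff'.2 fun x hx => ?_
  rw [hb, Function.notMem_support.1 (hx ∘ (ha₁ ·)),
    Function.notMem_support.1 (hx ∘ (ball_subset_ball hR <| ha₂ ·))]
  ring

lemma exists_isAtomicBlock_indicator_sub_indicator_const (hμ : μ univ ≠ 0) (hq : 1 ≤ q)
    (hΛpos : ∀ (x : X) (r : ℝ), 0 < r → 0 < Λ x r)
    (hΛmono : ∀ (x : X) (r s : ℝ), 0 < r → r ≤ s → Λ x r ≤ Λ x s) (ρ : ℝ) {x₀ : X} {R₀ R : ℝ}
    (hR₀ : 0 < R₀) (hR : R₀ ≤ R) (hB₀ : μ (ball x₀ R₀) ≠ 0) {A : Set X} (hA : MeasurableSet A)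
    (hAR : A ⊆ ball x₀ R) {f : X → ℝ} (hf : Integrable f μ) {ℓ L : ℝ} (hfℓ : ∀ x, |f x| ≤ ℓ)
    (hL : 0 < L) (hLA : ℓ * μ.real A ^ (1 / q) ≤ L * concentricAtomBound μ Λ q x₀ R₀) :
    ∃ M ≤ L + ℓ * μ.real A * μ.real (ball x₀ R₀) ^ (1 / q) /
        (concentricAtomBound μ Λ q x₀ R₀ * μ.real (ball x₀ R₀)),
      IsAtomicBlock μ Λ ρ q
        (A.indicator f - (ball x₀ R₀).indicator fun _ => (∫ x in A, f x ∂μ) / μ.real (ball x₀ R₀))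
        M := by
  set β := concentricAtomBound μ Λ q x₀ R₀
  set m₀ := μ.real (ball x₀ R₀)
  set I := ∫ x in A, f x ∂μ
  have hm₀ : 0 < m₀ := ENNReal.toReal_pos hB₀ (measure_ne_top _ _)
  have hβ : 0 < β := concentricAtomBound_pos hμ (hΛpos x₀ R₀ hR₀)
  have hℓ : 0 ≤ ℓ := (abs_nonneg _).trans (hfℓ x₀)
  have hq0 : 0 < q := by linarith
  have hI : |I| ≤ ℓ * μ.real A :=
    norm_setIntegral_le_of_norm_le_const (f := f) (measure_lt_top μ A) fun x _ => hfℓ x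
  have hblock := isAtomicBlock_of_concentric hμ hq hΛpos hΛmono ρ hR₀ hR
    (a₁ := A.indicator fun x => f x / L) (a₂ := (ball x₀ R₀).indicator fun _ => β / m₀ ^ (1 / q))
    (l₁ := L) (l₂ := -I * m₀ ^ (1 / q) / (β * m₀))
    (b := A.indicator f - (ball x₀ R₀).indicator fun _ => I / m₀)
    (Set.support_indicator_subset.trans hAR) Set.support_indicator_subset
    (fun x => by
      by_cases hA' : x ∈ A <;> by_cases hB : x ∈ ball x₀ R₀ <;>
        simp only [hA', hB, Pi.sub_apply, indicator_of_mem, indicator_of_notMem,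
          not_false_eq_true] <;> field_simp <;> ring)
    ((hf.indicator hA).sub ((integrable_const _).indicator measurableSet_ball))
    (by
      rw [integral_sub' (hf.indicator hA) ((integrable_const _).indicator measurableSet_ball),
        integral_indicator hA, integral_indicator_const _ measurableSet_ball, smul_eq_mul]
      field_simp
      ring)
    ((eLpNorm_indicator_le_ofReal hA (measure_ne_top _ _) (div_nonneg hℓ hL.le) hq0 fun x _ => by
        rw [abs_div, abs_of_pos hL]; gcongr; exact hfℓ x).trans
      (ENNReal.ofReal_le_ofReal <| by
        rw [div_mul_eq_mul_div, div_le_iff₀ hL, mul_comm β]; exact hLA))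
    (by
      rw [eLpNorm_indicator_const_ofReal measurableSet_ball (measure_ne_top _ _) (by positivity)
        hq0, div_mul_cancel₀ _ (by positivity)])
  refine ⟨_, ?_, hblock⟩
  rw [abs_of_pos hL, abs_div, abs_mul, abs_neg, abs_of_pos (by positivity : 0 < β * m₀),
    abs_of_pos (by positivity : 0 < m₀ ^ (1 / q))]
  gcongr

end Blocks

lemma hasSum_indicator_apply_of_pairwise_disjoint {α ι : Type*} {A : ι → Set α}
    (hA : Pairwise (Function.onFun Disjoint A)) (f : α → ℝ) {x : α} {j₀ : ι} (hx : x ∈ A j₀) :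
    HasSum (fun j => (A j).indicator f x) (f x) := by
  simpa [indicator_of_mem hx] using hasSum_single (f := fun j => (A j).indicator f x) j₀
    fun j hj => indicator_of_notMem (fun hxj => (hA hj).ne_of_mem hxj hx rfl) f

lemma hasSum_indicator_sub_indicator_setIntegral {ι : Type*} [Countable ι] {A : ι → Set X}
    (hAm : ∀ j, MeasurableSet (A j)) (hAdisj : Pairwise (Function.onFun Disjoint A))
    (hAcov : ⋃ j, A j = univ) {f : X → ℝ} (hf : Integrable f μ) (hf0 : ∫ x, f x ∂μ = 0)
    (B : Set X) (m : ℝ) (x : X) :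
    HasSum (fun j => (A j).indicator f x - B.indicator (fun _ => (∫ y in A j, f y ∂μ) / m) x)
      (f x) := by
  obtain ⟨j₀, hj₀⟩ := mem_iUnion.1 (hAcov.symm ▸ mem_univ x : x ∈ ⋃ j, A j)
  have hI : HasSum (fun j => ∫ y in A j, f y ∂μ) 0 := by
    simpa [hAcov, hf0] using hasSum_integral_iUnion hAm hAdisj hf.integrableOn
  have hcomp : HasSum (fun j => B.indicator (fun _ => (∫ y in A j, f y ∂μ) / m) x) 0 := by
    by_cases hx : x ∈ B
    · simpa [hx] using hI.div_const m
    · simp [hx]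
  simpa using (hasSum_indicator_apply_of_pairwise_disjoint hAdisj f hj₀).sub hcomp

lemma exists_partition_subset_balls_geometric [MetricSpace X] [OpensMeasurableSpace X]
    [IsFiniteMeasure μ] (hμ : μ univ ≠ 0) (x₀ : X) (R₀ : ℝ) {q : ℝ} (hq : 1 ≤ q) :
    ∃ (A : ℕ → Set X) (R : ℕ → ℝ), (∀ j, MeasurableSet (A j)) ∧
      Pairwise (Function.onFun Disjoint A) ∧ ⋃ j, A j = univ ∧
      (∀ j, R₀ ≤ R j ∧ A j ⊆ ball x₀ (R j)) ∧
      ∀ j, μ.real (A j) ^ (1 / q) ≤ μ.real univ ^ (1 / q) * (2:ℝ)⁻¹ ^ j ∧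
        μ.real (A j) ≤ μ.real univ * (2:ℝ)⁻¹ ^ j := by
  set MX := μ.real univ
  have hMX : 0 < MX := ENNReal.toReal_pos hμ (measure_ne_top _ _)
  have hq0 : 0 < q := by linarith
  obtain ⟨A, R, hAm, hAdisj, hAcov, hAR, hAsmall⟩ := exists_partition_subset_balls μ x₀ R₀
    (ε := fun j => ENNReal.ofReal (MX * ((2:ℝ)⁻¹ ^ (j + 1)) ^ q))
    fun j => (ENNReal.ofReal_pos.2 (by positivity)).ne'
  have hA : ∀ j, μ.real (A j) ≤ MX * ((2:ℝ)⁻¹ ^ j) ^ q := by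
    rintro (_ | j)
    · simpa using measureReal_mono (μ := μ) (subset_univ (A 0))
    · exact ENNReal.toReal_le_of_le_ofReal (by positivity) (hAsmall j)
  refine ⟨A, R, hAm, hAdisj, hAcov, hAR, fun j => ⟨?_, (hA j).trans ?_⟩⟩
  · calc μ.real (A j) ^ (1 / q) ≤ (MX * ((2:ℝ)⁻¹ ^ j) ^ q) ^ (1 / q) := by gcongr; exact hA j
      _ = _ := by rw [Real.mul_rpow hMX.le (by positivity), one_div,
          Real.rpow_rpow_inv (by positivity) hq0.ne']
  · refine mul_le_mul_of_nonneg_left ?_ hMX.le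
    simpa using Real.rpow_le_rpow_of_exponent_ge (x := (2:ℝ)⁻¹ ^ j) (by positivity)
      (pow_le_one₀ (by norm_num) (by norm_num)) hq

theorem exists_H1Norm_le_of_integral_eq_zero [MetricSpace X] [OpensMeasurableSpace X]
    [IsFiniteMeasure μ] {Λ : X → ℝ → ℝ} {q : ℝ} (hμ : μ univ ≠ 0) (hq : 1 ≤ q)
    (hΛpos : ∀ (x : X) (r : ℝ), 0 < r → 0 < Λ x r)
    (hΛmono : ∀ (x : X) (r s : ℝ), 0 < r → r ≤ s → Λ x r ≤ Λ x s) (ρ : ℝ) :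
    ∃ K, 0 < K ∧ ∀ f : X → ℝ, Measurable f → ∀ ℓ, 0 < ℓ → (∀ x, |f x| ≤ ℓ) →
      ∫ x, f x ∂μ = 0 → H1Norm μ Λ ρ q f ≤ ENNReal.ofReal (K * ℓ) := by
  obtain ⟨x₀, R₀, hR₀, hB₀⟩ := exists_measure_ball_ne_zero hμ
  obtain ⟨A, R, hAm, hAdisj, hAcov, hAR, hA⟩ :=
    exists_partition_subset_balls_geometric hμ x₀ R₀ hq
  set MX := μ.real univ
  have hMX : 0 < MX := ENNReal.toReal_pos hμ (measure_ne_top _ _)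
  set β := concentricAtomBound μ Λ q x₀ R₀
  set m₀ := μ.real (ball x₀ R₀)
  have hβ : 0 < β := concentricAtomBound_pos hμ (hΛpos x₀ R₀ hR₀)
  have hm₀ : 0 < m₀ := ENNReal.toReal_pos hB₀ (measure_ne_top _ _)
  set K₀ := (MX ^ (1 / q) + MX * m₀ ^ (1 / q) / m₀) / β
  refine ⟨2 * K₀, by positivity, fun f hfm ℓ hℓ hfℓ hf0 => ?_⟩
  have hf : Integrable f μ := (integrable_const ℓ).mono' hfm.aestronglyMeasurable (ae_of_all _ hfℓ)
  have hblock (j : ℕ) := exists_isAtomicBlock_indicator_sub_indicator_const hμ hq hΛpos hΛmono ρ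
    hR₀ (hAR j).1 hB₀ (hAm j) (hAR j).2 hf hfℓ (L := ℓ * MX ^ (1 / q) * (2:ℝ)⁻¹ ^ j / β)
    (by positivity) (by rw [div_mul_cancel₀ _ hβ.ne', mul_assoc]; gcongr; exact (hA j).1)
  choose M hM hMblock using hblock
  have hM_geom : ∀ j, M j ≤ ℓ * K₀ * (2:ℝ)⁻¹ ^ j := fun j =>
    calc M j ≤ ℓ * MX ^ (1 / q) * (2:ℝ)⁻¹ ^ j / β +
          ℓ * (MX * (2:ℝ)⁻¹ ^ j) * m₀ ^ (1 / q) / (β * m₀) := by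
          refine (hM j).trans ?_; gcongr; exact (hA j).2
      _ = ℓ * K₀ * (2:ℝ)⁻¹ ^ j := by simp only [K₀]; field_simp
  calc H1Norm μ Λ ρ q f ≤ ∑' j, ENNReal.ofReal (M j) :=
        iInf_le_of_le ⟨⟨_, M⟩, hMblock, ae_of_all _ <|
          hasSum_indicator_sub_indicator_setIntegral hAm hAdisj hAcov hf hf0 _ _⟩ le_rfl
    _ ≤ ∑' j, ENNReal.ofReal (ℓ * K₀ * (2:ℝ)⁻¹ ^ j) :=
        ENNReal.tsum_le_tsum fun j => ENNReal.ofReal_le_ofReal (hM_geom j)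
    _ = ENNReal.ofReal (2 * K₀ * ℓ) := by
        rw [← ENNReal.ofReal_tsum_of_nonneg (fun j => by positivity)
          ((summable_geometric_of_lt_one (by norm_num) (by norm_num)).mul_left _),
          tsum_mul_left, tsum_geometric_inv_two]
        ring_nf

end

lemma exists_two_pow_lt_le_two_pow_succ {x : ℝ} (hx : 1 < x) :
    ∃ n : ℕ, 2 ^ n < x ∧ x ≤ 2 ^ (n + 1) := by
  classical
  have hex : ∃ n : ℕ, x ≤ 2 ^ (n + 1) := (pow_unbounded_of_one_lt x one_lt_two).imp fun n hn =>
    hn.le.trans (pow_le_pow_right₀ one_le_two n.le_succ)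
  refine ⟨Nat.find hex, ?_, Nat.find_spec hex⟩
  rcases h : Nat.find hex with _ | n
  · simpa using hx
  · exact lt_of_not_ge (Nat.find_min hex (h ▸ n.lt_succ_self))

lemma two_pow_succ_mul_rpow_div_mul (n : ℕ) {s : ℝ} (hs : 0 < s) (r : ℝ) :
    (2 ^ (n + 1) * s) ^ r / (2 ^ n * s) * s = s ^ r * (2 ^ r * (2 ^ (r - 1)) ^ n) := by
  rw [Real.mul_rpow (by positivity) hs.le, ← Real.rpow_pow_comm zero_le_two,
    Real.rpow_sub_one two_ne_zero, pow_succ, div_pow]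
  field_simp

/-- `F` need not be measurable, and `∫⁻` is not subadditive on non-measurable functions: hence
the measurable majorant of `|F| ^ r`. -/
theorem exists_measurable_majorant_rpow_of_weakType {α : Type*} [MeasurableSpace α]
    (μ : Measure α) (F : α → ℝ) {c : ℝ≥0∞} {s r : ℝ} (hs : 0 < s) (hr : 0 ≤ r)
    (hF : ∀ t : ℝ, 0 < t → ENNReal.ofReal t * μ {x | t < |F x|} ≤ c * ENNReal.ofReal s) :
    ∃ Φ : α → ℝ≥0∞, Measurable Φ ∧ (∀ x, ENNReal.ofReal (|F x| ^ r) ≤ Φ x) ∧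
      ∫⁻ x, Φ x ∂μ ≤ ENNReal.ofReal (s ^ r) *
        (μ univ + c * ENNReal.ofReal (2 ^ r) * (1 - ENNReal.ofReal (2 ^ (r - 1)))⁻¹) := by
  choose U hU hUm hμU using fun n : ℕ => exists_measurable_superset μ {x | 2 ^ n * s < |F x|}
  have hμU_le (n : ℕ) : ENNReal.ofReal ((2 ^ (n + 1) * s) ^ r) * μ (U n) ≤
      ENNReal.ofReal (s ^ r) * (c * ENNReal.ofReal (2 ^ r) * ENNReal.ofReal (2 ^ (r - 1)) ^ n) := by
    have hpos : (0 : ℝ) < 2 ^ n * s := by positivity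
    calc _ = ENNReal.ofReal ((2 ^ (n + 1) * s) ^ r / (2 ^ n * s)) *
          (ENNReal.ofReal (2 ^ n * s) * μ (U n)) := by
          rw [← mul_assoc, ← ENNReal.ofReal_mul (by positivity), div_mul_cancel₀ _ hpos.ne']
      _ ≤ ENNReal.ofReal ((2 ^ (n + 1) * s) ^ r / (2 ^ n * s)) * (c * ENNReal.ofReal s) := by
          rw [hμU]; exact mul_le_mul_right (hF _ hpos) _
      _ = _ := by
          rw [mul_left_comm, ← ENNReal.ofReal_mul (by positivity),
            two_pow_succ_mul_rpow_div_mul n hs, ENNReal.ofReal_mul (by positivity),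
            ENNReal.ofReal_mul (by positivity), ENNReal.ofReal_pow (by positivity)]
          ring
  have hUind : Measurable fun x =>
      ∑' n, (U n).indicator (fun _ => ENNReal.ofReal ((2 ^ (n + 1) * s) ^ r)) x :=
    Measurable.tsum fun n => measurable_const.indicator (hUm n)
  refine ⟨fun x => ENNReal.ofReal (s ^ r) +
      ∑' n, (U n).indicator (fun _ => ENNReal.ofReal ((2 ^ (n + 1) * s) ^ r)) x,
    measurable_const.add hUind, fun x => ?_, ?_⟩
  · rcases le_or_gt |F x| s with hx | hx
    · exact le_add_right (ENNReal.ofReal_le_ofReal (by gcongr))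
    obtain ⟨n, hn, hn'⟩ := exists_two_pow_lt_le_two_pow_succ ((one_lt_div hs).2 hx)
    rw [lt_div_iff₀ hs] at hn
    rw [div_le_iff₀ hs] at hn'
    calc ENNReal.ofReal (|F x| ^ r) ≤ ENNReal.ofReal ((2 ^ (n + 1) * s) ^ r) :=
          ENNReal.ofReal_le_ofReal (by gcongr)
      _ = (U n).indicator (fun _ => ENNReal.ofReal ((2 ^ (n + 1) * s) ^ r)) x := by
          rw [indicator_of_mem (hU n hn)]
      _ ≤ _ := le_add_left (ENNReal.le_tsum n)
  · rw [lintegral_add_left measurable_const,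
      lintegral_tsum fun n => (measurable_const.indicator (hUm n)).aemeasurable, lintegral_const]
    simp_rw [lintegral_indicator_const (hUm _)]
    calc _ ≤ ENNReal.ofReal (s ^ r) * μ univ + ∑' n : ℕ, ENNReal.ofReal (s ^ r) *
          (c * ENNReal.ofReal (2 ^ r) * ENNReal.ofReal (2 ^ (r - 1)) ^ n) := by
          exact add_le_add_right (ENNReal.tsum_le_tsum hμU_le) _
      _ = _ := by rw [ENNReal.tsum_mul_left, ENNReal.tsum_mul_left, ENNReal.tsum_geometric, mul_add]

lemma abs_apply_add_const_rpow_le {α : Type*} {T : (α → ℝ) → α → ℝ}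
    (hsub : ∀ (f g : α → ℝ) (x : α), |T (fun y => f y + g y) x| ≤ |T f x| + |T g x|)
    (hhom : ∀ (c : ℝ) (f : α → ℝ) (x : α), |T (fun y => c * f y) x| = |c| * |T f x|)
    (f : α → ℝ) (c : ℝ) (x : α) {r : ℝ} (hr0 : 0 ≤ r) (hr1 : r ≤ 1) :
    |T (fun y => f y + c) x| ^ r ≤ |T f x| ^ r + |c| ^ r * |T (fun _ => 1) x| ^ r := by
  have h : |T (fun y => f y + c) x| ≤ |T f x| + |c| * |T (fun _ => 1) x| := by
    rw [← hhom c (fun _ => 1) x]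
    simpa only [mul_one] using hsub f (fun y => c * (fun _ => 1) y) x
  calc |T (fun y => f y + c) x| ^ r ≤ (|T f x| + |c| * |T (fun _ => 1) x|) ^ r := by gcongr
    _ ≤ |T f x| ^ r + (|c| * |T (fun _ => 1) x|) ^ r :=
        Real.rpow_add_le_add_rpow (abs_nonneg _) (by positivity) hr0 hr1
    _ = _ := by rw [Real.mul_rpow (abs_nonneg _) (abs_nonneg _)]

lemma abs_average_le_of_abs_le {α : Type*} [MeasurableSpace α] {μ : Measure α} [IsFiniteMeasure μ]
    {g : α → ℝ} {ℓ : ℝ} (hℓ : 0 ≤ ℓ) (hg : ∀ x, |g x| ≤ ℓ) : |⨍ x, g x ∂μ| ≤ ℓ := by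
  rw [average_eq, smul_eq_mul, abs_mul, abs_inv, abs_of_nonneg measureReal_nonneg]
  rcases eq_or_ne (μ.real univ) 0 with h | h
  · simp [h, hℓ]
  · rw [inv_mul_le_iff₀ (lt_of_le_of_ne measureReal_nonneg h.symm), mul_comm]
    exact norm_integral_le_of_norm_le_const
      (ae_of_all _ fun x => (Real.norm_eq_abs (g x)).trans_le (hg x))

lemma lintegral_rpow_abs_le_of_weakType {α : Type*} [MeasurableSpace α] {μ : Measure α}
    [IsFiniteMeasure μ] {T : (α → ℝ) → α → ℝ}
    (hsub : ∀ (f g : α → ℝ) (x : α), |T (fun y => f y + g y) x| ≤ |T f x| + |T g x|)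
    (hhom : ∀ (c : ℝ) (f : α → ℝ) (x : α), |T (fun y => c * f y) x| = |c| * |T f x|)
    {N : (α → ℝ) → ℝ≥0∞} {K : ℝ} (hK : 0 ≤ K)
    (hN : ∀ f : α → ℝ, Measurable f → ∀ ℓ, 0 < ℓ → (∀ x, |f x| ≤ ℓ) →
      ∫ x, f x ∂μ = 0 → N f ≤ ENNReal.ofReal (K * ℓ))
    {A : ℝ} (hT : ∀ (h : α → ℝ) (t : ℝ), 0 < t →
      ENNReal.ofReal t * μ {x | t < |T h x|} ≤ ENNReal.ofReal A * N h)
    {r : ℝ} (hr0 : 0 ≤ r) (hr1 : r ≤ 1) {g : α → ℝ} (hg : Measurable g) {ℓ : ℝ} (hℓ : 0 < ℓ)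
    (hgℓ : ∀ x, |g x| ≤ ℓ) :
    ∫⁻ x, ENNReal.ofReal (|T g x| ^ r) ∂μ ≤ ENNReal.ofReal (ℓ ^ r) *
      (μ univ + ENNReal.ofReal A * ENNReal.ofReal (2 * K) * ENNReal.ofReal (2 ^ r) *
          (1 - ENNReal.ofReal (2 ^ (r - 1)))⁻¹ +
        ∫⁻ x, ENNReal.ofReal (|T (fun _ => 1) x| ^ r) ∂μ) := by
  set κ := ⨍ x, g x ∂μ
  have hκ : |κ| ≤ ℓ := abs_average_le_of_abs_le hℓ.le hgℓ
  have hg₀ : N (fun x => g x - κ) ≤ ENNReal.ofReal (2 * K) * ENNReal.ofReal ℓ := by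
    rw [← ENNReal.ofReal_mul (by positivity), show 2 * K * ℓ = K * (2 * ℓ) by ring]
    refine hN _ (hg.sub_const κ) (2 * ℓ) (by positivity) (fun x => ?_) (integral_sub_average μ g)
    linarith [abs_sub (g x) κ, hgℓ x]
  obtain ⟨Φ, hΦm, hΦ, hΦint⟩ := exists_measurable_majorant_rpow_of_weakType μ
    (T fun x => g x - κ) hℓ hr0 fun t ht => (hT _ t ht).trans (by rw [mul_assoc]; gcongr)
  have hpt (x : α) : ENNReal.ofReal (|T g x| ^ r) ≤
      Φ x + ENNReal.ofReal (ℓ ^ r) * ENNReal.ofReal (|T (fun _ => 1) x| ^ r) := by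
    have h := abs_apply_add_const_rpow_le hsub hhom (fun x => g x - κ) κ x hr0 hr1
    simp only [sub_add_cancel] at h
    calc ENNReal.ofReal (|T g x| ^ r)
        ≤ ENNReal.ofReal (|T (fun x => g x - κ) x| ^ r + ℓ ^ r * |T (fun _ => 1) x| ^ r) :=
          ENNReal.ofReal_le_ofReal (h.trans (by gcongr))
      _ ≤ _ := by
          rw [← ENNReal.ofReal_mul (by positivity)]
          exact ENNReal.ofReal_add_le.trans (by gcongr; exact hΦ x)
  calc ∫⁻ x, ENNReal.ofReal (|T g x| ^ r) ∂μ
      ≤ ∫⁻ x, Φ x + ENNReal.ofReal (ℓ ^ r) * ENNReal.ofReal (|T (fun _ => 1) x| ^ r) ∂μ :=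
        lintegral_mono hpt
    _ = ∫⁻ x, Φ x ∂μ + ENNReal.ofReal (ℓ ^ r) *
          ∫⁻ x, ENNReal.ofReal (|T (fun _ => 1) x| ^ r) ∂μ := by
        rw [lintegral_add_left hΦm, lintegral_const_mul' _ _ ENNReal.ofReal_ne_top]
    _ ≤ _ := by
        rw [mul_add (ENNReal.ofReal (ℓ ^ r)) (_ + _)]
        gcongr

theorem average_rpow_T_bounded_general {X : Type*} [MetricSpace X] [MeasurableSpace X]
    [BorelSpace X] (μ : Measure X) (Λ : X → ℝ → ℝ) (ρ q : ℝ)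
    (hΛpos : ∀ (x : X) (r : ℝ), 0 < r → 0 < Λ x r)
    (hΛmono : ∀ (x : X) (r s : ℝ), 0 < r → r ≤ s → Λ x r ≤ Λ x s)
    (hq : 1 < q)
    (hfin : μ Set.univ < ⊤) (hpos : 0 < μ Set.univ)
    (T : (X → ℝ) → X → ℝ)
    (hsub : ∀ (f g : X → ℝ) (x : X), |T (fun y => f y + g y) x| ≤ |T f x| + |T g x|)
    (hhom : ∀ (c : ℝ) (f : X → ℝ) (x : X), |T (fun y => c * f y) x| = |c| * |T f x|)
    (A : ℝ)
    (hT : ∀ (h : X → ℝ) (t : ℝ), 0 < t →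
      ENNReal.ofReal t * μ {x | t < |T h x|} ≤ ENNReal.ofReal A * H1Norm μ Λ ρ q h)
    (r : ℝ) (hr : r ∈ Set.Ioo (0 : ℝ) 1)
    (hT1 : ∫⁻ x, ENNReal.ofReal (|T (fun _ => 1) x| ^ r) ∂μ < ⊤) :
    ∃ C : ℝ, 0 < C ∧ ∀ (g : X → ℝ), Measurable g → ∀ ℓ : ℝ, 0 < ℓ → (∀ x, |g x| ≤ ℓ) →
      ∫⁻ x, ENNReal.ofReal (|T g x| ^ r) ∂μ ≤
        ENNReal.ofReal (C * ℓ ^ r) * μ Set.univ := by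
  obtain ⟨hr0, hr1⟩ := hr
  have : IsFiniteMeasure μ := ⟨hfin⟩
  obtain ⟨K, hK, hH1⟩ := exists_H1Norm_le_of_integral_eq_zero hpos.ne' hq.le hΛpos hΛmono ρ
  set Z := μ univ + ENNReal.ofReal A * ENNReal.ofReal (2 * K) * ENNReal.ofReal (2 ^ r) *
      (1 - ENNReal.ofReal (2 ^ (r - 1)))⁻¹ + ∫⁻ x, ENNReal.ofReal (|T (fun _ => 1) x| ^ r) ∂μ
  have hZ : Z ≠ ⊤ := by
    have hgeom : ENNReal.ofReal (2 ^ (r - 1)) < 1 := ENNReal.ofReal_lt_one.2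
      (Real.rpow_lt_one_of_one_lt_of_neg one_lt_two (by linarith))
    have := (tsub_pos_of_lt hgeom).ne'
    finiteness
  have hZ0 : Z ≠ 0 := (hpos.trans_le (le_add_right (le_add_right le_rfl))).ne'
  refine ⟨(Z / μ univ).toReal, ENNReal.toReal_pos (ENNReal.div_pos hZ0 hfin.ne).ne'
    (ENNReal.div_ne_top hZ hpos.ne'), fun g hg ℓ hℓ hgℓ => ?_⟩
  calc ∫⁻ x, ENNReal.ofReal (|T g x| ^ r) ∂μ ≤ ENNReal.ofReal (ℓ ^ r) * Z :=
        lintegral_rpow_abs_le_of_weakType hsub hhom hK.le hH1 hT hr0.le hr1.le hg hℓ hgℓ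
    _ = ENNReal.ofReal ((Z / μ univ).toReal * ℓ ^ r) * μ univ := by
        rw [ENNReal.ofReal_mul ENNReal.toReal_nonneg,
          ENNReal.ofReal_toReal (ENNReal.div_ne_top hZ hpos.ne'), mul_comm (Z / μ univ),
          mul_assoc, ENNReal.div_mul_cancel hpos.ne' hfin.ne]

/-- If `μ(X) < ∞`, `T` is sublinear, bounded from `H¹(μ)` to `L^{1,∞}(μ)`, and
`∫ |T1|^r dμ < ∞` for some `r ∈ (0,1)`, then for every `g ∈ L^∞` with `‖g‖_∞ ≤ ℓ`,
`(1/μ(X)) ∫ |Tg|^r dμ ≤ C ℓ^r`. -/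
theorem average_rpow_T_bounded {X : Type*} [MetricSpace X] [MeasurableSpace X]
    [BorelSpace X] (μ : Measure X) (Λ : X → ℝ → ℝ) (Cl ρ q : ℝ) (N₀ : ℕ)
    (hΛpos : ∀ (x : X) (r : ℝ), 0 < r → 0 < Λ x r)
    (hΛmono : ∀ (x : X) (r s : ℝ), 0 < r → r ≤ s → Λ x r ≤ Λ x s)
    (hΛdom : ∀ (x : X) (r : ℝ), 0 < r → μ (ball x r) ≤ ENNReal.ofReal (Λ x r))
    (hΛdouble : ∀ (x : X) (r : ℝ), 0 < r → Λ x r ≤ Cl * Λ x (r / 2))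
    (hgd : ∀ (x : X) (r : ℝ), ∃ s : Finset X,
      s.card ≤ N₀ ∧ ball x r ⊆ ⋃ y ∈ s, ball y (r / 2))
    (hρ : 1 < ρ) (hq : 1 < q)
    (hfin : μ Set.univ < ⊤) (hpos : 0 < μ Set.univ)
    (T : (X → ℝ) → X → ℝ)
    (hsub : ∀ (f g : X → ℝ) (x : X), |T (fun y => f y + g y) x| ≤ |T f x| + |T g x|)
    (hhom : ∀ (c : ℝ) (f : X → ℝ) (x : X), |T (fun y => c * f y) x| = |c| * |T f x|)
    (A : ℝ) (hA : 0 < A)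
    (hT : ∀ (h : X → ℝ) (t : ℝ), 0 < t →
      ENNReal.ofReal t * μ {x | t < |T h x|} ≤ ENNReal.ofReal A * H1Norm μ Λ ρ q h)
    (r : ℝ) (hr : r ∈ Set.Ioo (0 : ℝ) 1)
    (hT1 : ∫⁻ x, ENNReal.ofReal (|T (fun _ => 1) x| ^ r) ∂μ < ⊤) :
    ∃ C : ℝ, 0 < C ∧ ∀ (g : X → ℝ), Measurable g → ∀ ℓ : ℝ, 0 < ℓ → (∀ x, |g x| ≤ ℓ) →
      ∫⁻ x, ENNReal.ofReal (|T g x| ^ r) ∂μ ≤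
        ENNReal.ofReal (C * ℓ ^ r) * μ Set.univ :=
  average_rpow_T_bounded_general μ Λ ρ q hΛpos hΛmono hq hfin hpos T hsub hhom A hT r hr hT1
end

section
/- Let T : H¹(μ) → measurable functions satisfy the weak-type bound μ({|Th| > s}) ≤ A ‖h‖_{H¹(μ)}/s for all s > 0, and let N be a maximal operator bounded from L¹(μ) to L^{1,∞}(μ). Then for r ∈ (0,1), N_r(Th) := [N(|Th|^r)]^{1/r} satisfies the weak-type bound μ({x : N_r(Th)(x) > ℓ}) ≤ C ‖h‖_{H¹(μ)}/ℓ for all ℓ > 0, with C depending only on r, A, and the weak (1,1) constant of N. -/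
open MeasureTheory
open scoped ENNReal

/-- If `u = Th` satisfies the weak-type bound `μ({|u| > s}) ≤ A B / s` (with `B = ‖h‖_{H¹}`)
and `N` is a monotone subadditive maximal operator of weak type `(1,1)`, then for `r ∈ (0,1)`,
`N_r(u) = [N(|u|^r)]^{1/r}` satisfies `μ({N_r u > ℓ}) ≤ C B / ℓ`. -/
theorem weak_type_Nr_of_weak_type {Ω : Type*} [MeasurableSpace Ω] (μ : Measure Ω)
    (r : ℝ) (hr : r ∈ Set.Ioo (0 : ℝ) 1)
    (N : (Ω → ℝ≥0∞) → Ω → ℝ≥0∞)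
    (hmono : ∀ g₁ g₂ : Ω → ℝ≥0∞, (∀ x, g₁ x ≤ g₂ x) → ∀ x, N g₁ x ≤ N g₂ x)
    (hNsub : ∀ (g₁ g₂ : Ω → ℝ≥0∞) (x : Ω), N (fun y => g₁ y + g₂ y) x ≤ N g₁ x + N g₂ x)
    (hNbdd : ∀ (c : ℝ≥0∞) (g : Ω → ℝ≥0∞), (∀ x, g x ≤ c) → ∀ x, N g x ≤ c)
    (A' : ℝ) (hA' : 0 < A')
    (hNweak : ∀ (g : Ω → ℝ≥0∞) (t : ℝ), 0 < t →
      ENNReal.ofReal t * μ {x | ENNReal.ofReal t < N g x} ≤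
        ENNReal.ofReal A' * ∫⁻ x, g x ∂μ)
    (A : ℝ) (hA : 0 < A) :
    ∃ C : ℝ, 0 < C ∧ ∀ (u : Ω → ℝ) (B : ℝ), 0 ≤ B → Measurable u →
      (∀ s : ℝ, 0 < s → μ {x | s < |u x|} ≤ ENNReal.ofReal (A * B / s)) →
      ∀ ℓ : ℝ, 0 < ℓ →
        μ {x | ENNReal.ofReal ℓ <
            (N (fun y => ENNReal.ofReal (|u y| ^ r)) x) ^ (1 / r)} ≤
          ENNReal.ofReal (C * B / ℓ) := by
  obtain ⟨hr0, hr1⟩ := hr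
  have hrne : r ≠ 0 := hr0.ne'
  have h1r : (0:ℝ) < 1 - r := by linarith
  have hinv1 : (1:ℝ) < 1/r := one_lt_one_div hr0 hr1
  have hne : (1:ℝ)/r - 1 ≠ 0 := by linarith
  have hs2 : (0:ℝ) < (2:ℝ) ^ (1/r) := Real.rpow_pos_of_pos (by norm_num) _
  refine ⟨A' * A * (2:ℝ) ^ (1/r) / (1 - r), by positivity, ?_⟩
  intro u B hB hu hweak ℓ hℓ
  set a : ℝ := ℓ / (2:ℝ) ^ (1/r) with ha_def
  have ha0 : 0 < a := by positivity
  set c : ℝ := a ^ r with hc_def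
  have hc0 : 0 < c := Real.rpow_pos_of_pos ha0 r
  -- ℓ ^ r = 2 * c
  have hℓr : ℓ ^ r = 2 * c := by
    have h2 : ((2:ℝ) ^ (1/r)) ^ r = 2 := by
      rw [← Real.rpow_mul (by norm_num), one_div_mul_cancel hrne, Real.rpow_one]
    rw [hc_def, ha_def, Real.div_rpow hℓ.le hs2.le, h2]
    field_simp
  -- the truncated function
  set f1 : Ω → ℝ := fun y => if a < |u y| then |u y| ^ r else 0 with hf1_def
  set g1 : Ω → ℝ≥0∞ := fun y => ENNReal.ofReal (f1 y) with hg1_def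
  set g : Ω → ℝ≥0∞ := fun y => ENNReal.ofReal (|u y| ^ r) with hg_def
  have hf1nn : ∀ y, 0 ≤ f1 y := by
    intro y; by_cases h : a < |u y| <;> simp [hf1_def, h, Real.rpow_nonneg (abs_nonneg _)]
  have hf1m : Measurable f1 := by
    apply Measurable.ite (measurableSet_lt measurable_const hu.abs)
    · measurability
    · exact measurable_const
  -- pointwise bound g ≤ c + g1
  have hpt : ∀ y, g y ≤ ENNReal.ofReal c + g1 y := by
    intro y
    by_cases h : a < |u y|
    · have : g1 y = g y := by simp [hg1_def, hg_def, hf1_def, h]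
      rw [this]; exact le_add_self
    · have hle : |u y| ^ r ≤ c := by
        rw [hc_def]
        exact Real.rpow_le_rpow (abs_nonneg _) (not_lt.mp h) hr0.le
      calc g y ≤ ENNReal.ofReal c := ENNReal.ofReal_le_ofReal hle
        _ ≤ _ := le_self_add
  -- inclusion of level sets
  have hincl : {x | ENNReal.ofReal ℓ < (N g x) ^ (1/r)} ⊆
      {x | ENNReal.ofReal c < N g1 x} := by
    intro x hx
    have hx' : ENNReal.ofReal ℓ < (N g x) ^ (1/r) := hx
    have h2c : ENNReal.ofReal c + ENNReal.ofReal c < N g x := by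
      have := ENNReal.rpow_lt_rpow hx' hr0
      rw [← ENNReal.rpow_mul, one_div_mul_cancel hrne, ENNReal.rpow_one,
        ENNReal.ofReal_rpow_of_pos hℓ, hℓr] at this
      calc ENNReal.ofReal c + ENNReal.ofReal c
          = ENNReal.ofReal (2 * c) := by
            rw [two_mul, ENNReal.ofReal_add hc0.le hc0.le]
        _ < N g x := this
    have hNle : N g x ≤ ENNReal.ofReal c + N g1 x := by
      calc N g x ≤ N (fun y => ENNReal.ofReal c + g1 y) x := hmono _ _ hpt x
        _ ≤ N (fun _ => ENNReal.ofReal c) x + N g1 x := hNsub _ _ x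
        _ ≤ ENNReal.ofReal c + N g1 x := by
            gcongr
            exact hNbdd _ _ (fun _ => le_rfl) x
    have := lt_of_lt_of_le h2c hNle
    exact (ENNReal.add_lt_add_iff_left ENNReal.ofReal_ne_top).mp this
  -- the weak (1,1) bound for N applied to g1
  have hweakN := hNweak g1 c hc0
  -- layer cake bound for ∫ g1
  have hlayer : ∫⁻ x, g1 x ∂μ = ∫⁻ t in Set.Ioi (0:ℝ), μ {y | t < f1 y} :=
    lintegral_eq_lintegral_meas_lt μ (Filter.Eventually.of_forall hf1nn) hf1m.aemeasurable
  -- part 1 : small t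
  have hpart1 : ∫⁻ t in Set.Ioc (0:ℝ) c, μ {y | t < f1 y} ≤
      ENNReal.ofReal (A * B / a * c) := by
    have hb : ∀ t ∈ Set.Ioc (0:ℝ) c, μ {y | t < f1 y} ≤ ENNReal.ofReal (A * B / a) := by
      intro t ht
      refine le_trans (measure_mono ?_) (hweak a ha0)
      intro y hy
      simp only [Set.mem_setOf_eq, hf1_def] at hy ⊢
      by_contra h
      simp [h] at hy
      linarith [ht.1]
    calc ∫⁻ t in Set.Ioc (0:ℝ) c, μ {y | t < f1 y}
        ≤ ∫⁻ _ in Set.Ioc (0:ℝ) c, ENNReal.ofReal (A * B / a) := by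
          refine lintegral_mono_ae ?_
          filter_upwards [self_mem_ae_restrict (measurableSet_Ioc (a := (0:ℝ)) (b := c))]
            with t ht
          exact hb t ht
      _ = ENNReal.ofReal (A * B / a) * ENNReal.ofReal c := by
          rw [setLIntegral_const, Real.volume_Ioc, sub_zero]
      _ = ENNReal.ofReal (A * B / a * c) := by
          rw [ENNReal.ofReal_mul (by positivity)]
  -- part 2 : large t
  have hexp : -(1/r) < -1 := by linarith
  have hpart2 : ∫⁻ t in Set.Ioi c, μ {y | t < f1 y} ≤
      ENNReal.ofReal (A * B * (c ^ (1 - 1/r) / (1/r - 1))) := by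
    have hb : ∀ t ∈ Set.Ioi c, μ {y | t < f1 y} ≤ ENNReal.ofReal (A * B * t ^ (-(1/r))) := by
      intro t ht
      have ht0 : 0 < t := lt_trans hc0 ht
      have h1 : μ {y | t < f1 y} ≤ ENNReal.ofReal (A * B / t ^ (1/r)) := by
        refine le_trans (measure_mono ?_) (hweak (t ^ (1/r)) (Real.rpow_pos_of_pos ht0 _))
        intro y hy
        simp only [Set.mem_setOf_eq, hf1_def] at hy ⊢
        by_cases h : a < |u y|
        · simp only [h, if_true] at hy
          have := Real.rpow_lt_rpow ht0.le hy (by positivity : (0:ℝ) < 1/r)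
          rwa [← Real.rpow_mul (abs_nonneg _), mul_one_div_cancel hrne, Real.rpow_one] at this
        · simp [h] at hy; linarith [ht0]
      have heq : A * B * t ^ (-(1/r)) = A * B / t ^ (1/r) := by
        rw [Real.rpow_neg ht0.le]; ring
      rwa [heq]
    have hint : IntegrableOn (fun t : ℝ => A * B * t ^ (-(1/r))) (Set.Ioi c) :=
      (integrableOn_Ioi_rpow_of_lt hexp hc0).const_mul (A * B)
    have hnn : 0 ≤ᵐ[volume.restrict (Set.Ioi c)] fun t : ℝ => A * B * t ^ (-(1/r)) := by
      filter_upwards [self_mem_ae_restrict (measurableSet_Ioi : MeasurableSet (Set.Ioi c))]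
        with t ht
      have ht0 : 0 < t := lt_trans hc0 ht
      positivity
    calc ∫⁻ t in Set.Ioi c, μ {y | t < f1 y}
        ≤ ∫⁻ t in Set.Ioi c, ENNReal.ofReal (A * B * t ^ (-(1/r))) := by
          refine lintegral_mono_ae ?_
          filter_upwards [self_mem_ae_restrict (measurableSet_Ioi (a := c))]
            with t ht
          exact hb t ht
      _ = ENNReal.ofReal (∫ t in Set.Ioi c, A * B * t ^ (-(1/r))) :=
          (ofReal_integral_eq_lintegral_ofReal hint hnn).symm
      _ = ENNReal.ofReal (A * B * (c ^ (1 - 1/r) / (1/r - 1))) := by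
          congr 1
          rw [MeasureTheory.integral_const_mul, integral_Ioi_rpow_of_lt hexp hc0]
          congr 1
          rw [show -(1/r) + 1 = -(1/r - 1) by ring, show (1:ℝ) - 1/r = -(1/r - 1) by ring,
            div_neg, neg_div, neg_neg]
  -- combine into an integral bound
  set D : ℝ := A * B / a * c + A * B * (c ^ (1 - 1/r) / (1/r - 1)) with hD_def
  have hq0 : (0:ℝ) < 1/r - 1 := by linarith
  have hterm2 : 0 ≤ A * B * (c ^ (1 - 1/r) / (1/r - 1)) :=
    mul_nonneg (by positivity) (div_nonneg (Real.rpow_pos_of_pos hc0 _).le hq0.le)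
  have hD0 : 0 ≤ D := add_nonneg (by positivity) hterm2
  have hI : ∫⁻ x, g1 x ∂μ ≤ ENNReal.ofReal D := by
    rw [hlayer, ← Set.Ioc_union_Ioi_eq_Ioi hc0.le,
      lintegral_union measurableSet_Ioi (Set.Ioc_disjoint_Ioi le_rfl)]
    calc _ ≤ ENNReal.ofReal (A * B / a * c) +
        ENNReal.ofReal (A * B * (c ^ (1 - 1/r) / (1/r - 1))) := add_le_add hpart1 hpart2
      _ = ENNReal.ofReal D := by
        rw [hD_def, ENNReal.ofReal_add (by positivity) hterm2]
  -- conclude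
  have hμ : μ {x | ENNReal.ofReal c < N g1 x} ≤ ENNReal.ofReal (A' * D / c) := by
    rw [ENNReal.ofReal_div_of_pos hc0]
    rw [ENNReal.le_div_iff_mul_le (Or.inl (ENNReal.ofReal_pos.mpr hc0).ne')
      (Or.inl ENNReal.ofReal_ne_top), mul_comm]
    calc ENNReal.ofReal c * μ {x | ENNReal.ofReal c < N g1 x}
        ≤ ENNReal.ofReal A' * ∫⁻ x, g1 x ∂μ := hweakN
      _ ≤ ENNReal.ofReal A' * ENNReal.ofReal D := by gcongr
      _ = ENNReal.ofReal (A' * D) := (ENNReal.ofReal_mul hA'.le).symm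
  -- final arithmetic
  have harith : A' * D / c = A' * A * (2:ℝ) ^ (1/r) / (1 - r) * B / ℓ := by
    have h3 : c ^ (1 - 1/r) = a ^ (r - 1) := by
      rw [hc_def, ← Real.rpow_mul ha0.le]
      congr 1
      field_simp
    have h4 : a ^ (r - 1) = c / a := by
      rw [hc_def, Real.rpow_sub ha0, Real.rpow_one]
    have ha' : a = ℓ / (2:ℝ) ^ (1/r) := ha_def
    rw [hD_def, h3, h4, ha']
    have h2ne : ((2:ℝ) ^ (1/r)) ≠ 0 := hs2.ne'
    field_simp
    ring
  calc μ {x | ENNReal.ofReal ℓ < (N g x) ^ (1/r)}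
      ≤ μ {x | ENNReal.ofReal c < N g1 x} := measure_mono hincl
    _ ≤ ENNReal.ofReal (A' * D / c) := hμ
    _ = ENNReal.ofReal (A' * A * (2:ℝ) ^ (1/r) / (1 - r) * B / ℓ) := by rw [harith]
end

section
/- Let (X, d, μ) be an upper doubling, geometrically doubling metric measure space with μ(X) = ∞. Then the space L^∞_{b,0}(μ) of bounded functions with bounded support and integral zero is dense in L^p(μ) for every p ∈ (1,∞). -/
/-!
Truncating a simple approximation of `f` to a large ball gives a bounded function `g` with
bounded support close to `f` in `L^p`. Its mean `a = ∫ g` is then removed by subtracting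
`a / μ(B)` on a ball `B`; this costs `|a| μ(B)^(1/p - 1)` in `L^p`, which is small once `μ(B)` is
large because `p > 1`. Balls of arbitrarily large finite measure exist since `μ(X) = ∞` while
each ball has finite measure under the upper doubling bound.
-/

open Metric MeasureTheory Filter Topology
open scoped ENNReal

namespace MeasureTheory

variable {α E : Type*} [MeasurableSpace α] [NormedAddCommGroup E] {μ : Measure α}
  {p : ℝ≥0∞}

theorem MemLp.tendsto_eLpNorm_indicator_of_antitone {f : α → E} (hf : MemLp f p μ)
    (hp : p ≠ ∞) {s : ℕ → Set α} (hs : ∀ n, MeasurableSet (s n)) (hanti : Antitone s)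
    (hempty : ⋂ n, s n = ∅) :
    Tendsto (fun n => eLpNorm ((s n).indicator f) p μ) atTop (𝓝 0) := by
  rcases eq_or_ne p 0 with rfl | hp0
  · simp
  set ν := μ.withDensity fun x => ‖f x‖ₑ ^ p.toReal
  have hν : Tendsto (ν ∘ s) atTop (𝓝 0) := by
    have hfin : ν (s 0) ≠ ∞ := by
      refine (measure_mono (Set.subset_univ _)).trans_lt ?_ |>.ne
      rw [withDensity_apply _ MeasurableSet.univ, Measure.restrict_univ]
      exact lintegral_rpow_enorm_lt_top_of_eLpNorm_lt_top hp0 hp hf.eLpNorm_lt_top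
    rw [← measure_empty (μ := ν), ← hempty]
    exact tendsto_measure_iInter_atTop (fun n => (hs n).nullMeasurableSet) hanti ⟨0, hfin⟩
  have hnorm : ∀ n, eLpNorm ((s n).indicator f) p μ = ν (s n) ^ (1 / p.toReal) := fun n => by
    rw [eLpNorm_indicator_eq_eLpNorm_restrict (hs n),
      eLpNorm_eq_lintegral_rpow_enorm_toReal hp0 hp, withDensity_apply _ (hs n)]
  simp_rw [hnorm]
  have hexp : 0 < 1 / p.toReal := one_div_pos.2 (ENNReal.toReal_pos hp0 hp)
  rw [← ENNReal.zero_rpow_of_pos hexp]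
  exact ((ENNReal.continuous_rpow_const (y := 1 / p.toReal)).tendsto 0).comp hν

variable {s : Set α}

theorem integral_indicator_const_div_measureReal (hs : MeasurableSet s) (h0 : μ s ≠ 0)
    (htop : μ s ≠ ∞) (a : ℝ) : ∫ x, s.indicator (fun _ => a / μ.real s) x ∂μ = a := by
  rw [integral_indicator_const _ hs, smul_eq_mul,
    mul_div_cancel₀ _ ((measureReal_ne_zero_iff htop).2 h0)]

theorem eLpNorm_indicator_const_div_measureReal (hs : MeasurableSet s) (h0 : μ s ≠ 0)
    (htop : μ s ≠ ∞) (hp0 : p ≠ 0) (hp : p ≠ ∞) (a : ℝ) :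
    eLpNorm (s.indicator fun _ => a / μ.real s) p μ = ‖a‖ₑ * (μ s)⁻¹ ^ (1 - 1 / p.toReal) := by
  have hreal : μ.real s ≠ 0 := (measureReal_ne_zero_iff htop).2 h0
  rw [eLpNorm_indicator_const hs hp0 hp, div_eq_mul_inv a, enorm_mul, enorm_inv hreal,
    Real.enorm_of_nonneg measureReal_nonneg, ofReal_measureReal htop, mul_assoc,
    ENNReal.rpow_sub _ _ (ENNReal.inv_ne_zero.2 htop) (ENNReal.inv_ne_top.2 h0),
    ENNReal.rpow_one, ENNReal.inv_rpow, div_eq_mul_inv (μ s)⁻¹, inv_inv]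

section Metric

variable {X : Type*} [MetricSpace X] [MeasurableSpace X] {μ : Measure X} {p : ℝ≥0∞}

theorem tendsto_measure_ball_nat_atTop (μ : Measure X) (x₀ : X) :
    Tendsto (fun n : ℕ => μ (ball x₀ n)) atTop (𝓝 (μ Set.univ)) := by
  rw [← iUnion_ball_nat x₀]
  exact tendsto_measure_iUnion_atTop fun m n hmn => ball_subset_ball (Nat.cast_le.2 hmn)

/-- The class `L^∞_b(μ)` of the paper. -/
def BoundedWithBoundedSupport (g : X → ℝ) : Prop :=
  Measurable g ∧ (∃ M : ℝ, ∀ x, |g x| ≤ M) ∧ Bornology.IsBounded (Function.support g)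

namespace BoundedWithBoundedSupport

variable {g h : X → ℝ}

theorem sub (hg : BoundedWithBoundedSupport g) (hh : BoundedWithBoundedSupport h) :
    BoundedWithBoundedSupport (g - h) := by
  obtain ⟨hgm, ⟨M, hM⟩, hgs⟩ := hg
  obtain ⟨hhm, ⟨N, hN⟩, hhs⟩ := hh
  exact ⟨hgm.sub hhm, ⟨M + N, fun x => (abs_sub _ _).trans (add_le_add (hM x) (hN x))⟩,
    (hgs.union hhs).subset (Function.support_sub g h)⟩

theorem integrable (hg : BoundedWithBoundedSupport g) {x₀ : X}
    (hball : ∀ r, μ (ball x₀ r) ≠ ∞) : Integrable g μ := by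
  obtain ⟨hgm, ⟨M, hM⟩, hgs⟩ := hg
  obtain ⟨r, hr⟩ := hgs.subset_ball x₀
  refine (integrableOn_iff_integrable_of_support_subset hr).1 ?_
  exact Measure.integrableOn_of_bounded (hball r) hgm.aestronglyMeasurable (M := M)
    (ae_of_all _ fun x => (Real.norm_eq_abs _).trans_le (hM x))

end BoundedWithBoundedSupport

section OpensMeasurable

variable [OpensMeasurableSpace X]

theorem MemLp.exists_indicator_ball_simpleFunc_eLpNorm_sub_le {f : X → E} (hf : MemLp f p μ)
    (hp1 : 1 ≤ p) (hp : p ≠ ∞) (x₀ : X) {ε : ℝ≥0∞} (hε : ε ≠ 0) :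
    ∃ (s : SimpleFunc X E) (R : ℝ), eLpNorm (f - (ball x₀ R).indicator s) p μ ≤ ε := by
  have htail := hf.tendsto_eLpNorm_indicator_of_antitone hp (s := fun n : ℕ => (ball x₀ n)ᶜ)
    (fun n => measurableSet_ball.compl)
    (fun m n hmn => Set.compl_subset_compl.2 (ball_subset_ball (Nat.cast_le.2 hmn)))
    (by rw [← Set.compl_iUnion, iUnion_ball_nat, Set.compl_univ])
  obtain ⟨n, hn⟩ := (htail.eventually_lt_const (ENNReal.half_pos hε)).exists
  obtain ⟨s, hs, -⟩ := hf.exists_simpleFunc_eLpNorm_sub_lt hp (ENNReal.half_pos hε).ne'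
  refine ⟨s, n, ?_⟩
  have hsplit : f - (ball x₀ n).indicator s =
      (ball x₀ n)ᶜ.indicator f + (ball x₀ n).indicator (f - ⇑s) := by
    ext x
    by_cases hx : x ∈ ball x₀ n <;> simp [hx]
  have hmeas := hf.aestronglyMeasurable
  calc eLpNorm (f - (ball x₀ n).indicator s) p μ
      ≤ eLpNorm ((ball x₀ n)ᶜ.indicator f) p μ
        + eLpNorm ((ball x₀ n).indicator (f - ⇑s)) p μ := by
        rw [hsplit]
        exact eLpNorm_add_le (hmeas.indicator measurableSet_ball.compl)
          ((hmeas.sub s.aestronglyMeasurable).indicator measurableSet_ball) hp1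
    _ ≤ ε / 2 + ε / 2 := add_le_add hn.le ((MeasureTheory.eLpNorm_indicator_le _).trans hs.le)
    _ = ε := ENNReal.add_halves ε

theorem boundedWithBoundedSupport_indicator_ball {g : X → ℝ} (hg : Measurable g) {M : ℝ}
    (hM : ∀ x, |g x| ≤ M) (x₀ : X) (R : ℝ) :
    BoundedWithBoundedSupport ((ball x₀ R).indicator g) :=
  ⟨hg.indicator measurableSet_ball,
    ⟨M, fun x => (norm_indicator_le_norm_self g x).trans (hM x)⟩,
    isBounded_ball.subset Set.support_indicator_subset⟩

theorem MemLp.exists_boundedWithBoundedSupport_eLpNorm_sub_le [Nonempty X] {f : X → ℝ}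
    (hf : MemLp f p μ) (hp1 : 1 ≤ p) (hp : p ≠ ∞) {ε : ℝ≥0∞} (hε : ε ≠ 0) :
    ∃ g, BoundedWithBoundedSupport g ∧ eLpNorm (f - g) p μ ≤ ε := by
  obtain ⟨s, R, hs⟩ :=
    hf.exists_indicator_ball_simpleFunc_eLpNorm_sub_le hp1 hp (Classical.arbitrary X) hε
  obtain ⟨M, hM⟩ := s.exists_forall_norm_le
  exact ⟨_, boundedWithBoundedSupport_indicator_ball s.measurable (M := M) hM _ R, hs⟩

theorem exists_boundedWithBoundedSupport_integral_eq_eLpNorm_le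
    {x₀ : X} (hball : ∀ r, μ (ball x₀ r) ≠ ∞) (hinf : μ Set.univ = ∞) (hp1 : 1 < p)
    (hp : p ≠ ∞) (a : ℝ) {δ : ℝ≥0∞} (hδ : δ ≠ 0) :
    ∃ h : X → ℝ, BoundedWithBoundedSupport h ∧ ∫ x, h x ∂μ = a ∧ eLpNorm h p μ ≤ δ := by
  have hballs := tendsto_measure_ball_nat_atTop μ x₀
  rw [hinf] at hballs
  have hexp : 0 < 1 - 1 / p.toReal := by
    have hp1' : 1 < p.toReal := by simpa using ENNReal.toReal_strict_mono hp hp1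
    exact sub_pos.2 ((div_lt_one (zero_lt_one.trans hp1')).2 hp1')
  have hsmall : Tendsto (fun n : ℕ => ‖a‖ₑ * (μ (ball x₀ n))⁻¹ ^ (1 - 1 / p.toReal)) atTop
      (𝓝 0) := by
    have hinv := tendsto_inv_iff.2 hballs
    rw [ENNReal.inv_top] at hinv
    have := ENNReal.Tendsto.const_mul
      (((ENNReal.continuous_rpow_const (y := 1 - 1 / p.toReal)).tendsto 0).comp hinv)
      (Or.inr (enorm_ne_top : ‖a‖ₑ ≠ ∞))
    rwa [ENNReal.zero_rpow_of_pos hexp, mul_zero] at this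
  obtain ⟨n, hn0, hnδ⟩ := ((hballs.eventually_const_lt ENNReal.zero_lt_top).and
    (hsmall.eventually_lt_const (pos_iff_ne_zero.2 hδ))).exists
  refine ⟨(ball x₀ n).indicator fun _ => a / μ.real (ball x₀ n),
    boundedWithBoundedSupport_indicator_ball measurable_const (fun _ => le_rfl) x₀ n,
    integral_indicator_const_div_measureReal measurableSet_ball hn0.ne' (hball n) a, ?_⟩
  rw [eLpNorm_indicator_const_div_measureReal measurableSet_ball hn0.ne' (hball n)
    (zero_lt_one.trans hp1).ne' hp]
  exact hnδ.le

end OpensMeasurable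

end Metric

end MeasureTheory

theorem dense_bounded_mean_zero_general {X : Type*} [MetricSpace X] [MeasurableSpace X]
    [BorelSpace X] (μ : Measure X) (Λ : X → ℝ → ℝ)
    (hΛdom : ∀ (x : X) (r : ℝ), 0 < r → μ (ball x r) ≤ ENNReal.ofReal (Λ x r))
    (hinf : μ Set.univ = ⊤) :
    ∀ p : ℝ, 1 < p → ∀ f : X → ℝ, MemLp f (ENNReal.ofReal p) μ → ∀ ε : ℝ, 0 < ε →
      ∃ g : X → ℝ, Measurable g ∧ (∃ M : ℝ, ∀ x, |g x| ≤ M) ∧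
        Bornology.IsBounded (Function.support g) ∧
        Integrable g μ ∧ (∫ x, g x ∂μ) = 0 ∧
        eLpNorm (fun x => f x - g x) (ENNReal.ofReal p) μ ≤ ENNReal.ofReal ε := by
  intro p hp f hf ε hε
  set q := ENNReal.ofReal p
  have hq1 : 1 < q := ENNReal.one_lt_ofReal.2 hp
  have hε2 : ENNReal.ofReal (ε / 2) ≠ 0 := (ENNReal.ofReal_pos.2 (half_pos hε)).ne'
  obtain ⟨x₀, -⟩ : (Set.univ : Set X).Nonempty :=
    nonempty_of_measure_ne_zero (hinf ▸ ENNReal.top_ne_zero)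
  have : Nonempty X := ⟨x₀⟩
  have hball : ∀ r, μ (ball x₀ r) ≠ ∞ := by
    intro r
    rcases le_or_gt r 0 with hr | hr
    · simp [ball_eq_empty.2 hr]
    · exact ((hΛdom x₀ r hr).trans_lt ENNReal.ofReal_lt_top).ne
  obtain ⟨g, hg, hfg⟩ :=
    hf.exists_boundedWithBoundedSupport_eLpNorm_sub_le hq1.le ENNReal.ofReal_ne_top hε2
  obtain ⟨h, hh, hh_int, hh_norm⟩ := exists_boundedWithBoundedSupport_integral_eq_eLpNorm_le
    hball hinf hq1 ENNReal.ofReal_ne_top (∫ x, g x ∂μ) hε2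
  obtain ⟨hmeas, hbdd, hsupp⟩ := hg.sub hh
  refine ⟨g - h, hmeas, hbdd, hsupp, (hg.integrable hball).sub (hh.integrable hball), ?_, ?_⟩
  · rw [integral_sub' (hg.integrable hball) (hh.integrable hball), hh_int, sub_self]
  · calc eLpNorm (f - (g - h)) q μ ≤ eLpNorm (f - g) q μ + eLpNorm h q μ := by
          rw [← sub_add]
          exact eLpNorm_add_le (hf.1.sub hg.1.aestronglyMeasurable) hh.1.aestronglyMeasurable
            hq1.le
      _ ≤ ENNReal.ofReal (ε / 2) + ENNReal.ofReal (ε / 2) := add_le_add hfg hh_norm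
      _ = ENNReal.ofReal ε := by
          rw [← ENNReal.ofReal_add (half_pos hε).le (half_pos hε).le, add_halves]

/-- If `(X, d, μ)` is upper doubling and geometrically doubling with `μ(X) = ∞`, then the
bounded functions with bounded support and mean zero are dense in `L^p(μ)`, `p ∈ (1,∞)`. -/
theorem dense_bounded_mean_zero {X : Type*} [MetricSpace X] [MeasurableSpace X]
    [BorelSpace X] (μ : Measure X) (Λ : X → ℝ → ℝ) (Cl : ℝ) (N₀ : ℕ)
    (hΛpos : ∀ (x : X) (r : ℝ), 0 < r → 0 < Λ x r)
    (hΛmono : ∀ (x : X) (r s : ℝ), 0 < r → r ≤ s → Λ x r ≤ Λ x s)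
    (hΛdom : ∀ (x : X) (r : ℝ), 0 < r → μ (ball x r) ≤ ENNReal.ofReal (Λ x r))
    (hΛdouble : ∀ (x : X) (r : ℝ), 0 < r → Λ x r ≤ Cl * Λ x (r / 2))
    (hgd : ∀ (x : X) (r : ℝ), ∃ s : Finset X,
      s.card ≤ N₀ ∧ ball x r ⊆ ⋃ y ∈ s, ball y (r / 2))
    (hinf : μ Set.univ = ⊤) :
    ∀ p : ℝ, 1 < p → ∀ f : X → ℝ, MemLp f (ENNReal.ofReal p) μ → ∀ ε : ℝ, 0 < ε →
      ∃ g : X → ℝ, Measurable g ∧ (∃ M : ℝ, ∀ x, |g x| ≤ M) ∧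
        Bornology.IsBounded (Function.support g) ∧
        Integrable g μ ∧ (∫ x, g x ∂μ) = 0 ∧
        eLpNorm (fun x => f x - g x) (ENNReal.ofReal p) μ ≤ ENNReal.ofReal ε :=
  dense_bounded_mean_zero_general μ Λ hΛdom hinf
end
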